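/- arXiv:1610.05406 — 4 statements merged into one kernel-verified Lean document; each statement's English description precedes it below -/
import Mathlib

section
/- Let G be a finite simple graph and k a positive integer. If G has a partial k-coloring f and there exists an (f, k)-degenerate sequence (E_1, …, E_s) for G, then χ'_s(G) ≤ k. -/
open scoped Classical

namespace StrongEC

/-- Two edges of `G` conflict for strong edge-coloring: they are distinct and either share
an endpoint or are both adjacent to a common edge of `G`. -/
def Conflict {V : Type*} (G : SimpleGraph V) (e e' : Sym2 V) : Prop :=
  e ≠ e' ∧ ((∃ v, v ∈ e ∧ v ∈ e') ∨
    ∃ f ∈ G.edgeSet, (∃ v, v ∈ e ∧ v ∈ f) ∧ (∃ w, w ∈ e' ∧ w ∈ f))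

/-- `C` is a strong edge-coloring of `G` with `k` colors. -/
def IsStrongColoring {V : Type*} (G : SimpleGraph V) {k : ℕ} (C : Sym2 V → Fin k) : Prop :=
  ∀ e ∈ G.edgeSet, ∀ e' ∈ G.edgeSet, Conflict G e e' → C e ≠ C e'

/-- `G` admits a strong `k`-edge-coloring. -/
def HasStrongColoring {V : Type*} (G : SimpleGraph V) (k : ℕ) : Prop :=
  ∃ C : Sym2 V → Fin k, IsStrongColoring G C

/-- The strong chromatic index of `G`: the least `k` such that `G` admits a strong
`k`-edge-coloring. -/
noncomputable def strongChromaticIndex {V : Type*} (G : SimpleGraph V) : ℕ :=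
  sInf {k | HasStrongColoring G k}

/-- `N²_G[e]`: the set of edges of `G` incident to a vertex adjacent to some vertex
of `e`. -/
def N2 {V : Type*} (G : SimpleGraph V) (e : Sym2 V) : Set (Sym2 V) :=
  {f | f ∈ G.edgeSet ∧ ∃ v w, v ∈ e ∧ G.Adj v w ∧ w ∈ f}

/-- `f` is a partial `k`-coloring of `G` with domain `E₀`. -/
def IsPartialColoring {V : Type*} (G : SimpleGraph V) (E₀ : Set (Sym2 V)) {k : ℕ}
    (f : Sym2 V → Fin k) : Prop :=
  E₀ ⊆ G.edgeSet ∧ ∀ e ∈ E₀, ∀ e' ∈ E₀, e' ≠ e → e' ∈ N2 G e → f e ≠ f e'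

/-- The `f`-multiplicity of `e`: `|N²_G[e] ∩ E₀| - |f(N²_G[e] ∩ E₀)|`. -/
noncomputable def mult {V : Type*} (G : SimpleGraph V) (E₀ : Set (Sym2 V)) {k : ℕ}
    (f : Sym2 V → Fin k) (e : Sym2 V) : ℕ :=
  (N2 G e ∩ E₀).ncard - (f '' (N2 G e ∩ E₀)).ncard

/-- If `G` has a partial `k`-coloring `f` and an `(f, k)`-degenerate sequence
`(E 0, …, E (s-1))`, then `χ'_s(G) ≤ k`. -/
theorem strong_chromatic_index_le_of_degenerate_sequence {V : Type*} [Fintype V]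
    (G : SimpleGraph V) (k : ℕ) (hk : 0 < k)
    (E₀ : Set (Sym2 V)) (f : Sym2 V → Fin k) (hf : IsPartialColoring G E₀ f)
    (s : ℕ) (E : Fin s → Set (Sym2 V))
    (hdisj : ∀ i j, i ≠ j → Disjoint (E i) (E j))
    (hunion : (⋃ i, E i) = G.edgeSet \ E₀)
    (hdeg : ∀ i, ∀ e ∈ E i,
      (N2 G e \ ⋃ j ∈ Set.Ioi i, E j).ncard ≤ k + mult G E₀ f e) :
    strongChromaticIndex G ≤ k := by
  classical
  have hE0sub : E₀ ⊆ G.edgeSet := hf.1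
  have hsubE : ∀ i, E i ⊆ G.edgeSet \ E₀ := by
    intro i
    rw [← hunion]
    exact Set.subset_iUnion E i
  -- e ∈ N2 G e for edges
  have hself : ∀ e ∈ G.edgeSet, e ∈ N2 G e := by
    intro e he
    induction e using Sym2.ind with
    | _ a b =>
      exact ⟨he, a, b, Sym2.mem_mk_left a b, (SimpleGraph.mem_edgeSet G).mp he,
        Sym2.mem_mk_right a b⟩
  -- symmetry of N2 on edges
  have hN2symm : ∀ e e' : Sym2 V, e ∈ G.edgeSet → e' ∈ N2 G e → e ∈ N2 G e' := by
    rintro e e' he ⟨he', v, w, hv, hadj, hw⟩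
    exact ⟨he, w, v, hw, hadj.symm, hv⟩
  -- sharing a vertex implies N2 membership
  have hcase1 : ∀ e e' : Sym2 V, e' ∈ G.edgeSet → ∀ v, v ∈ e → v ∈ e' → e' ∈ N2 G e := by
    intro e e' he' v hv hv'
    obtain ⟨u, rfl⟩ := Sym2.mem_iff_exists.mp hv'
    exact ⟨he', v, u, hv, (SimpleGraph.mem_edgeSet G).mp he', Sym2.mem_mk_right v u⟩
  -- conflict implies N2 membership
  have hconf : ∀ e e' : Sym2 V, e ∈ G.edgeSet → e' ∈ G.edgeSet → Conflict G e e' →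
      e' ∈ N2 G e := by
    rintro e e' he he' ⟨-, hc⟩
    rcases hc with ⟨v, hv, hv'⟩ | ⟨g, hg, ⟨v, hv, hvg⟩, ⟨w, hw, hwg⟩⟩
    · exact hcase1 e e' he' v hv hv'
    · by_cases hvw : v = w
      · exact hcase1 e e' he' v hv (hvw ▸ hw)
      · have hadj : G.Adj v w := by
          induction g using Sym2.ind with
          | _ a b =>
            have hab : G.Adj a b := (SimpleGraph.mem_edgeSet G).mp hg
            rcases Sym2.mem_iff.mp hvg with rfl | rfl <;>
              rcases Sym2.mem_iff.mp hwg with rfl | rfl <;>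
              first
                | exact absurd rfl hvw
                | exact hab
                | exact hab.symm
        exact ⟨he', v, w, hv, hadj, hw⟩
  -- the ordering machinery
  set N := Fintype.card (Sym2 V) with hNdef
  set ε := Fintype.equivFin (Sym2 V) with hεdef
  set idx : Sym2 V → ℕ := fun x => if h : ∃ i, x ∈ E i then (Classical.choose h : Fin s).val else 0
    with hidxdef
  have hidx : ∀ (x : Sym2 V) (i : Fin s), x ∈ E i → idx x = i.val := by
    intro x i hxi
    have hex : ∃ j, x ∈ E j := ⟨i, hxi⟩
    have hch : x ∈ E (Classical.choose hex) := Classical.choose_spec hex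
    have heq : Classical.choose hex = i := by
      by_contra hne
      exact Set.disjoint_left.mp (hdisj _ _ hne) hch hxi
    simp only [hidxdef, dif_pos hex, heq]
  set ordE : Sym2 V → ℕ := fun x => idx x * N + (ε x).val with horddef
  have hordinj : ∀ x y : Sym2 V, ordE x = ordE y → x = y := by
    intro x y h
    have hx := (ε x).isLt
    have hy := (ε y).isLt
    have h' : (ε x).val + idx x * N = (ε y).val + idx y * N := by
      simp only [horddef] at h
      rw [Nat.add_comm (idx x * N), Nat.add_comm (idx y * N)] at h
      exact h
    have h1 : ((ε x).val + idx x * N) % N = ((ε y).val + idx y * N) % N := by rw [h']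
    rw [Nat.add_mul_mod_self_right, Nat.add_mul_mod_self_right,
      Nat.mod_eq_of_lt hx, Nat.mod_eq_of_lt hy] at h1
    exact ε.injective (Fin.ext h1)
  set D : ℕ → Set (Sym2 V) := fun n => E₀ ∪ {x | x ∈ G.edgeSet ∧ ordE x < n} with hDdef
  have hDedge : ∀ n, ∀ x ∈ D n, x ∈ G.edgeSet := by
    intro n x hx
    rcases hx with hx | hx
    · exact hE0sub hx
    · exact hx.1
  -- main induction
  have key : ∀ n, ∃ C : Sym2 V → Fin k, (∀ x ∈ E₀, C x = f x) ∧
      ∀ x ∈ D n, ∀ y ∈ D n, y ≠ x → y ∈ N2 G x → C x ≠ C y := by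
    intro n
    induction n with
    | zero =>
      refine ⟨f, fun _ _ => rfl, ?_⟩
      intro x hx y hy hne hN2
      have hx' : x ∈ E₀ := by
        rcases hx with hx | hx
        · exact hx
        · exact absurd hx.2 (Nat.not_lt_zero _)
      have hy' : y ∈ E₀ := by
        rcases hy with hy | hy
        · exact hy
        · exact absurd hy.2 (Nat.not_lt_zero _)
      exact hf.2 x hx' y hy' hne hN2
    | succ n ih =>
      obtain ⟨C, hC0, hC⟩ := ih
      by_cases h : ∃ x, x ∈ G.edgeSet ∧ x ∉ E₀ ∧ ordE x = n
      · obtain ⟨e, heE, heE0, horde⟩ := h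
        have heU : e ∈ ⋃ i, E i := by
          rw [hunion]; exact ⟨heE, heE0⟩
        obtain ⟨i, hei⟩ := Set.mem_iUnion.mp heU
        have heD : e ∉ D n := by
          rintro (hx | hx)
          · exact heE0 hx
          · have := hx.2
            omega
        set L := ⋃ j ∈ Set.Ioi i, E j with hLdef
        set A := N2 G e ∩ E₀ with hAdef
        set B := N2 G e ∩ (D n \ E₀) with hBdef
        -- e itself
        have heN2 : e ∈ N2 G e := hself e heE
        have heL : e ∉ L := by
          rintro hx
          simp only [hLdef, Set.mem_iUnion] at hx
          obtain ⟨j, hj, hxj⟩ := hx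
          exact Set.disjoint_left.mp (hdisj i j (ne_of_lt hj)) hei hxj
        have heA : e ∉ A := fun hx => heE0 hx.2
        have heB : e ∉ B := fun hx => heD hx.2.1
        -- B avoids L
        have hBL : ∀ x ∈ B, x ∉ L := by
          rintro x ⟨-, hxD, hxE0⟩ hxL
          simp only [hLdef, Set.mem_iUnion] at hxL
          obtain ⟨j, hj, hxj⟩ := hxL
          have hxord : ordE x < n := by
            rcases hxD with hx | hx
            · exact absurd hx hxE0
            · exact hx.2
          have hij : i.val + 1 ≤ j.val := hj
          have h1 : ordE e = i.val * N + (ε e).val := by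
            simp only [horddef, hidx e i hei]
          have h2 : ordE x = j.val * N + (ε x).val := by
            simp only [horddef, hidx x j hxj]
          have h3 : (i.val + 1) * N ≤ j.val * N := Nat.mul_le_mul_right N hij
          have h4 : (ε e).val < N := (ε e).isLt
          have h5 : i.val * N + N = (i.val + 1) * N := by ring
          omega
        have hAL : ∀ x ∈ A, x ∉ L := by
          rintro x ⟨-, hx0⟩ hxL
          simp only [hLdef, Set.mem_iUnion] at hxL
          obtain ⟨j, hj, hxj⟩ := hxL
          exact (hsubE j hxj).2 hx0
        have hsub2 : insert e (A ∪ B) ⊆ N2 G e \ L := by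
          rintro x hx
          rcases hx with rfl | hx | hx
          · exact ⟨heN2, heL⟩
          · exact ⟨hx.1, hAL x hx⟩
          · exact ⟨hx.1, hBL x hx⟩
        have hABdisj : Disjoint A B := by
          rw [Set.disjoint_left]
          rintro x ⟨-, hx0⟩ ⟨-, -, hx0'⟩
          exact hx0' hx0
        have heAB : e ∉ A ∪ B := by
          rintro (hx | hx)
          · exact heA hx
          · exact heB hx
        have hcard1 : (A ∪ B).ncard + 1 ≤ (N2 G e \ L).ncard := by
          have := Set.ncard_le_ncard hsub2 (Set.toFinite _)
          rwa [Set.ncard_insert_of_notMem heAB (Set.toFinite _)] at this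
        have hcard2 : (A ∪ B).ncard = A.ncard + B.ncard :=
          Set.ncard_union_eq hABdisj (Set.toFinite _) (Set.toFinite _)
        have hmult : mult G E₀ f e = A.ncard - (f '' A).ncard := rfl
        have hfA : (f '' A).ncard ≤ A.ncard := Set.ncard_image_le (Set.toFinite _)
        have hdeg' := hdeg i e hei
        rw [← hLdef] at hdeg'
        -- the forbidden set
        have hN2D : N2 G e ∩ D n = A ∪ B := by
          ext x
          constructor
          · rintro ⟨hx1, hx2⟩
            by_cases hx0 : x ∈ E₀
            · exact Or.inl ⟨hx1, hx0⟩
            · exact Or.inr ⟨hx1, hx2, hx0⟩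
          · rintro (⟨hx1, hx2⟩ | ⟨hx1, hx2, -⟩)
            · exact ⟨hx1, Or.inl hx2⟩
            · exact ⟨hx1, hx2⟩
        have hCA : C '' A = f '' A := by
          apply Set.image_congr
          intro x hx
          exact hC0 x hx.2
        have hFcard : (C '' (N2 G e ∩ D n)).ncard < k := by
          rw [hN2D, Set.image_union, hCA]
          have h6 : (f '' A ∪ C '' B).ncard ≤ (f '' A).ncard + (C '' B).ncard :=
            Set.ncard_union_le _ _
          have h7 : (C '' B).ncard ≤ B.ncard := Set.ncard_image_le (Set.toFinite _)
          omega
        obtain ⟨c, hc⟩ : ∃ c : Fin k, c ∉ C '' (N2 G e ∩ D n) := by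
          by_contra hall
          push_neg at hall
          have : (C '' (N2 G e ∩ D n)) = Set.univ := Set.eq_univ_of_forall hall
          rw [this, Set.ncard_univ, Nat.card_eq_fintype_card, Fintype.card_fin] at hFcard
          omega
        refine ⟨Function.update C e c, ?_, ?_⟩
        · intro x hx
          have hxe : x ≠ e := fun hxe => heE0 (by rw [← hxe]; exact hx)
          rw [Function.update_of_ne hxe]
          exact hC0 x hx
        · have hsplit : ∀ x ∈ D (n + 1), x ∈ D n ∨ x = e := by
            rintro x (hx | hx)
            · exact Or.inl (Or.inl hx)
            · rcases Nat.lt_succ_iff_lt_or_eq.mp hx.2 with h' | h'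
              · exact Or.inl (Or.inr ⟨hx.1, h'⟩)
              · exact Or.inr (hordinj x e (h'.trans horde.symm))
          intro x hx y hy hne hN2xy
          have hDne : ∀ z ∈ D n, z ≠ e := fun z hz h' => heD (h' ▸ hz)
          rcases hsplit x hx with hxD | hxe
          · rcases hsplit y hy with hyD | hye
            · rw [Function.update_of_ne (hDne x hxD), Function.update_of_ne (hDne y hyD)]
              exact hC x hxD y hyD hne hN2xy
            · -- y = e, x ∈ D n
              rw [hye] at hN2xy ⊢
              rw [Function.update_of_ne (hDne x hxD), Function.update_self]
              intro habs
              apply hc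
              have hxN2e : x ∈ N2 G e := hN2symm x e (hDedge n x hxD) hN2xy
              exact ⟨x, ⟨hxN2e, hxD⟩, habs⟩
          · rcases hsplit y hy with hyD | hye
            · -- x = e, y ∈ D n
              rw [hxe] at hN2xy ⊢
              rw [Function.update_of_ne (hDne y hyD), Function.update_self]
              intro habs
              exact hc ⟨y, ⟨hN2xy, hyD⟩, habs.symm⟩
            · exact absurd (hye.trans hxe.symm) hne
      · refine ⟨C, hC0, ?_⟩
        have hDsub : D (n + 1) ⊆ D n := by
          rintro x (hx | hx)
          · exact Or.inl hx
          · rcases Nat.lt_succ_iff_lt_or_eq.mp hx.2 with h' | h'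
            · exact Or.inr ⟨hx.1, h'⟩
            · by_cases hx0 : x ∈ E₀
              · exact Or.inl hx0
              · exact absurd ⟨x, hx.1, hx0, h'⟩ h
        intro x hx y hy
        exact hC x (hDsub hx) y (hDsub hy)
  -- conclude
  obtain ⟨C, -, hC⟩ := key (s * N)
  have hmemD : ∀ x ∈ G.edgeSet, x ∈ D (s * N) := by
    intro x hx
    by_cases hx0 : x ∈ E₀
    · exact Or.inl hx0
    · have hxU : x ∈ ⋃ i, E i := by rw [hunion]; exact ⟨hx, hx0⟩
      obtain ⟨i, hi⟩ := Set.mem_iUnion.mp hxU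
      refine Or.inr ⟨hx, ?_⟩
      have h1 : ordE x = i.val * N + (ε x).val := by
        simp only [horddef, hidx x i hi]
      have h2 : (i.val + 1) * N ≤ s * N := Nat.mul_le_mul_right N i.isLt
      have h3 : (ε x).val < N := (ε x).isLt
      have h4 : i.val * N + N = (i.val + 1) * N := by ring
      omega
  have hhas : HasStrongColoring G k := by
    refine ⟨C, ?_⟩
    intro e he e' he' hcf
    exact hC e (hmemD e he) e' (hmemD e' he') (Ne.symm hcf.1) (hconf e e' he he' hcf)
  exact Nat.sInf_le hhas


end StrongEC
end

section
/- Let Δ ≥ 2 and t be integers with 2 ≤ t ≤ Δ + 1, and let K_Δ(t) be the graph obtained from the complete graph K_t by attaching Δ − t + 1 new pendant vertices of degree 1 to each of its t vertices. Then χ'_s(K_Δ(t)) = |E(K_Δ(t))| = tΔ − t(t−1)/2; in other words, in any strong edge-coloring of K_Δ(t) all edges receive pairwise distinct colors, and tΔ − t(t−1)/2 colors suffice. -/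
open scoped Classical

namespace StrongEC

/-- The auxiliary relation for `K_Δ(t)`: the `t` vertices of the clique are the left
summands, and each clique vertex `i` gets the `Δ - t + 1` pendant vertices `(i, m)`. -/
def kdRel (Δ t : ℕ) :
    (Fin t ⊕ Fin t × Fin (Δ + 1 - t)) → (Fin t ⊕ Fin t × Fin (Δ + 1 - t)) → Prop
  | Sum.inl _, Sum.inl _ => True
  | Sum.inl i, Sum.inr p => i = p.1
  | _, _ => False

/-- The graph `K_Δ(t)`: a clique on `t` vertices together with `Δ - t + 1` pendant
vertices attached to each clique vertex. -/
def KD (Δ t : ℕ) : SimpleGraph (Fin t ⊕ Fin t × Fin (Δ + 1 - t)) :=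
  SimpleGraph.fromRel (kdRel Δ t)

lemma kd_adj {Δ t : ℕ} {a b : Fin t ⊕ Fin t × Fin (Δ + 1 - t)} :
    (KD Δ t).Adj a b ↔ a ≠ b ∧ (kdRel Δ t a b ∨ kdRel Δ t b a) :=
  SimpleGraph.fromRel_adj _ a b

lemma adj_inl_inl {Δ t : ℕ} {i j : Fin t} :
    (KD Δ t).Adj (Sum.inl i) (Sum.inl j) ↔ i ≠ j := by
  simp [kd_adj, kdRel]

lemma adj_inl_inr {Δ t : ℕ} {i : Fin t} {p : Fin t × Fin (Δ + 1 - t)} :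
    (KD Δ t).Adj (Sum.inl i) (Sum.inr p) ↔ i = p.1 := by
  simp [kd_adj, kdRel]

lemma not_adj_inr_inr {Δ t : ℕ} {p q : Fin t × Fin (Δ + 1 - t)} :
    ¬ (KD Δ t).Adj (Sum.inr p) (Sum.inr q) := by
  simp [kd_adj, kdRel]

lemma sym2_cases {α : Type*} (p : Sym2 α) : ∃ i j, p = s(i, j) :=
  Sym2.ind (f := fun z => ∃ i j, z = s(i, j)) (fun i j => ⟨i, j, rfl⟩) p

def enc (Δ t : ℕ) :
    ({p : Sym2 (Fin t) // ¬ p.IsDiag} ⊕ Fin t × Fin (Δ + 1 - t)) →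
      Sym2 (Fin t ⊕ Fin t × Fin (Δ + 1 - t))
  | Sum.inl p => p.1.map Sum.inl
  | Sum.inr (i, m) => s(Sum.inl i, Sum.inr (i, m))

lemma enc_mem (Δ t : ℕ) (x) : enc Δ t x ∈ (KD Δ t).edgeSet := by
  rcases x with ⟨p, hp⟩ | ⟨i, m⟩
  · obtain ⟨i, j, rfl⟩ := sym2_cases p
    simp only [enc, Sym2.map_pair_eq]
    rw [SimpleGraph.mem_edgeSet, adj_inl_inl]
    simpa using hp
  · show s(Sum.inl i, Sum.inr (i, m)) ∈ (KD Δ t).edgeSet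
    rw [SimpleGraph.mem_edgeSet]
    exact adj_inl_inr.mpr rfl

lemma enc_inj (Δ t : ℕ) : Function.Injective (enc Δ t) := by
  rintro (⟨p, hp⟩ | ⟨i, m⟩) (⟨q, hq⟩ | ⟨j, n⟩) h
  · simpa using Sym2.map.injective Sum.inl_injective h
  · exfalso
    have : Sum.inr (j, n) ∈ Sym2.map Sum.inl p := by
      rw [show Sym2.map Sum.inl p = enc Δ t (Sum.inl ⟨p, hp⟩) from rfl, h, enc]
      simp
    rw [Sym2.mem_map] at this
    obtain ⟨a, -, ha⟩ := this
    exact absurd ha (by simp)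
  · exfalso
    have : Sum.inr (i, m) ∈ Sym2.map Sum.inl q := by
      rw [show Sym2.map Sum.inl q = enc Δ t (Sum.inl ⟨q, hq⟩) from rfl, ← h, enc]
      simp
    rw [Sym2.mem_map] at this
    obtain ⟨a, -, ha⟩ := this
    exact absurd ha (by simp)
  · simp only [enc, Sym2.eq_iff] at h
    rcases h with ⟨h1, h2⟩ | ⟨h1, h2⟩
    · simp_all
    · simp_all

def enc' (Δ t : ℕ) (x : {p : Sym2 (Fin t) // ¬ p.IsDiag} ⊕ Fin t × Fin (Δ + 1 - t)) : ↥((KD Δ t).edgeSet) := ⟨enc Δ t x, enc_mem Δ t x⟩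

lemma enc'_bij (Δ t : ℕ) : Function.Bijective (enc' Δ t) := by
  constructor
  · intro x y h
    exact enc_inj Δ t (congrArg Subtype.val h)
  · rintro ⟨e, he⟩
    obtain ⟨a, b, rfl⟩ := sym2_cases e
    rw [SimpleGraph.mem_edgeSet] at he
    rcases a with i | p
    · rcases b with j | q
      · have hij : i ≠ j := adj_inl_inl.mp he
        refine ⟨Sum.inl ⟨s(i, j), by simp [hij]⟩, Subtype.ext ?_⟩
        simp [enc', enc, Sym2.map_pair_eq]
      · obtain ⟨q1, q2⟩ := q
        have h1 : i = q1 := adj_inl_inr.mp he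
        subst h1
        exact ⟨Sum.inr (i, q2), rfl⟩
    · rcases b with j | q
      · have he' := he.symm
        obtain ⟨p1, p2⟩ := p
        have h1 : j = p1 := adj_inl_inr.mp he'
        subst h1
        refine ⟨Sum.inr (j, p2), Subtype.ext ?_⟩
        simp only [enc', enc]
        exact Sym2.eq_swap
      · exact absurd he not_adj_inr_inr

lemma card_edgeSet (Δ t : ℕ) :
    (KD Δ t).edgeSet.ncard = t.choose 2 + t * (Δ + 1 - t) := by
  rw [← Nat.card_coe_set_eq, ← Nat.card_congr (Equiv.ofBijective _ (enc'_bij Δ t))]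
  rw [Nat.card_sum, Nat.card_eq_fintype_card, Nat.card_eq_fintype_card,
    Sym2.card_subtype_not_diag, Fintype.card_fin, Fintype.card_prod,
    Fintype.card_fin, Fintype.card_fin]



lemma exists_inl_mem {Δ t : ℕ} {e : Sym2 (Fin t ⊕ Fin t × Fin (Δ + 1 - t))}
    (he : e ∈ (KD Δ t).edgeSet) : ∃ i, Sum.inl i ∈ e := by
  obtain ⟨a, b, rfl⟩ := sym2_cases e
  rw [SimpleGraph.mem_edgeSet, kd_adj] at he
  rcases a with i | p
  · exact ⟨i, by simp⟩
  · rcases b with j | q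
    · exact ⟨j, by simp⟩
    · simp [kdRel] at he

lemma conflict_of_ne {Δ t : ℕ} {e e' : Sym2 (Fin t ⊕ Fin t × Fin (Δ + 1 - t))}
    (he : e ∈ (KD Δ t).edgeSet) (he' : e' ∈ (KD Δ t).edgeSet) (hne : e ≠ e') :
    Conflict (KD Δ t) e e' := by
  obtain ⟨i, hi⟩ := exists_inl_mem he
  obtain ⟨j, hj⟩ := exists_inl_mem he'
  refine ⟨hne, ?_⟩
  by_cases hij : i = j
  · exact Or.inl ⟨Sum.inl i, hi, hij ▸ hj⟩
  · refine Or.inr ⟨s(Sum.inl i, Sum.inl j), ?_, ⟨Sum.inl i, hi, by simp⟩,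
      ⟨Sum.inl j, hj, by simp⟩⟩
    rw [SimpleGraph.mem_edgeSet]
    exact adj_inl_inl.mpr hij

/-- For `2 ≤ t ≤ Δ + 1` and `Δ ≥ 2`, the strong chromatic index of `K_Δ(t)` equals its
number of edges, namely `tΔ - t(t-1)/2`; indeed any strong edge-coloring gives all edges
pairwise distinct colors, and `tΔ - t(t-1)/2` colors suffice. -/
theorem strong_chromatic_index_KD (Δ t : ℕ) (hΔ : 2 ≤ Δ) (ht2 : 2 ≤ t)
    (ht : t ≤ Δ + 1) :
    strongChromaticIndex (KD Δ t) = (KD Δ t).edgeSet.ncard ∧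
    (KD Δ t).edgeSet.ncard = t * Δ - t * (t - 1) / 2 ∧
    (∀ (k : ℕ) (C : Sym2 (Fin t ⊕ Fin t × Fin (Δ + 1 - t)) → Fin k),
      IsStrongColoring (KD Δ t) C → Set.InjOn C (KD Δ t).edgeSet) ∧
    HasStrongColoring (KD Δ t) (t * Δ - t * (t - 1) / 2) := by
  classical
  set N := (KD Δ t).edgeSet.ncard with hNdef
  -- arithmetic identity
  have hceven : ∃ c, t * (t - 1) = c + c := by
    have h := Nat.even_mul_succ_self (t - 1)
    rw [Nat.sub_add_cancel (by omega : 1 ≤ t)] at h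
    obtain ⟨c, hc⟩ := h
    exact ⟨c, by rw [Nat.mul_comm]; omega⟩
  obtain ⟨c, hc⟩ := hceven
  have harith : t.choose 2 + t * (Δ + 1 - t) = t * Δ - t * (t - 1) / 2 := by
    have h2 : t * Δ + t = t * t + t * (Δ + 1 - t) := by
      have h := Nat.add_sub_cancel' ht
      calc t * Δ + t = t * (Δ + 1) := by ring
        _ = t * (t + (Δ + 1 - t)) := by rw [h]
        _ = t * t + t * (Δ + 1 - t) := by rw [Nat.mul_add]
    have h3 : t * t = t * (t - 1) + t := by
      rcases t with _ | n
      · omega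
      · simp only [Nat.succ_sub_one]
        ring
    rw [Nat.choose_two_right]
    omega
  have hcard : N = t * Δ - t * (t - 1) / 2 := by
    rw [hNdef, card_edgeSet, harith]
  -- injectivity of any strong coloring
  have hinj : ∀ (k : ℕ) (C : Sym2 (Fin t ⊕ Fin t × Fin (Δ + 1 - t)) → Fin k),
      IsStrongColoring (KD Δ t) C → Set.InjOn C (KD Δ t).edgeSet := by
    intro k C hC e he e' he' hCe
    by_contra hne
    exact hC e he e' he' (conflict_of_ne he he' hne) hCe
  -- a strong coloring with N colors
  have hNpos : 0 < N := by
    rw [hNdef]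
    rw [Set.ncard_pos (Set.toFinite _)]
    have h01 : (⟨0, by omega⟩ : Fin t) ≠ ⟨1, by omega⟩ := by
      simp [Fin.ext_iff]
    refine ⟨s(Sum.inl ⟨0, by omega⟩, Sum.inl ⟨1, by omega⟩), ?_⟩
    rw [SimpleGraph.mem_edgeSet]
    exact adj_inl_inl.mpr h01
  have hNcard : Nat.card ↥((KD Δ t).edgeSet) = N := Nat.card_coe_set_eq _
  let E : ↥((KD Δ t).edgeSet) ≃ Fin N := Finite.equivFinOfCardEq hNcard
  have hhas : HasStrongColoring (KD Δ t) N := by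
    refine ⟨fun e => if h : e ∈ (KD Δ t).edgeSet then E ⟨e, h⟩ else ⟨0, hNpos⟩, ?_⟩
    intro e he e' he' hconf
    simp only [dif_pos he, dif_pos he']
    intro h
    exact hconf.1 (congrArg Subtype.val (E.injective h))
  -- the strong chromatic index equals N
  have hsci : strongChromaticIndex (KD Δ t) = N := by
    apply le_antisymm
    · exact Nat.sInf_le hhas
    · refine le_csInf ⟨N, hhas⟩ ?_
      intro k hk
      obtain ⟨C, hC⟩ := hk
      have hCi := hinj k C hC
      calc N = (KD Δ t).edgeSet.ncard := rfl
        _ = (C '' (KD Δ t).edgeSet).ncard := (Set.ncard_image_of_injOn hCi).symm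
        _ ≤ (Set.univ : Set (Fin k)).ncard :=
            Set.ncard_le_ncard (Set.subset_univ _) Set.finite_univ
        _ = k := by simp [Set.ncard_univ]
  exact ⟨hsci, hcard, hinj, hcard ▸ hhas⟩

end StrongEC
end

section
/- Let Δ and t be integers with 3 ≤ t ≤ Δ + 1, and let K_Δ(t) be the graph obtained from the complete graph K_t by attaching Δ − t + 1 new pendant vertices of degree 1 to each of its t vertices. Then Mad(K_Δ(t)) = t − 1. -/
open scoped Classical

namespace StrongEC

/-- The maximum average degree of a finite graph `G`: the supremum over nonempty vertex
subsets `A` of `2 * e(A) / |A|`, where `e(A)` is the number of edges of `G` inside `A`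
(this equals the maximum of `2|E(H)|/|V(H)|` over all subgraphs `H` with at least one
vertex). -/
noncomputable def mad {V : Type*} (G : SimpleGraph V) : ℝ :=
  sSup {x : ℝ | ∃ A : Finset V, A.Nonempty ∧
    x = 2 * ({e ∈ G.edgeSet | ∀ v ∈ e, v ∈ A}.ncard : ℝ) / (A.card : ℝ)}

lemma two_mul_choose_two (n : ℕ) : 2 * n.choose 2 = n * (n - 1) := by
  induction n with
  | zero => rfl
  | succ n ih =>
    rw [Nat.choose_succ_succ, Nat.mul_add, ih, Nat.choose_one_right]
    rcases n with _ | m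
    · rfl
    · simp only [Nat.succ_sub_one]
      ring

/-- For `3 ≤ t ≤ Δ + 1`, the maximum average degree of `K_Δ(t)` is `t - 1`. -/
theorem mad_KD (Δ t : ℕ) (ht3 : 3 ≤ t) (ht : t ≤ Δ + 1) :
    mad (KD Δ t) = (t : ℝ) - 1 := by
  set V := Fin t ⊕ Fin t × Fin (Δ + 1 - t)
  set S : Set ℝ := {x : ℝ | ∃ A : Finset V, A.Nonempty ∧
    x = 2 * ({e ∈ (KD Δ t).edgeSet | ∀ v ∈ e, v ∈ A}.ncard : ℝ) / (A.card : ℝ)} with hS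
  have htpos : 0 < t := by omega
  -- Upper bound: every element of S is ≤ t - 1
  have hub : ∀ x ∈ S, x ≤ (t : ℝ) - 1 := by
    rintro x ⟨A, hA, rfl⟩
    set B : Finset (Fin t) := Finset.univ.filter (fun i => Sum.inl i ∈ A) with hB
    set P : Finset (Fin t × Fin (Δ + 1 - t)) := Finset.univ.filter (fun p => Sum.inr p ∈ A) with hP
    -- the candidate superset of the edge set
    set F : Finset (Sym2 V) :=
      (B.offDiag.image (fun q => s(Sum.inl q.1, Sum.inl q.2))) ∪
        (P.image (fun p => s(Sum.inl p.1, Sum.inr p))) with hF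
    have hsub : {e ∈ (KD Δ t).edgeSet | ∀ v ∈ e, v ∈ A} ⊆ ↑F := by
      rintro e ⟨he, hv⟩
      induction e with
      | _ u v =>
        rw [Sym2.ball] at hv
        rw [SimpleGraph.mem_edgeSet, KD, SimpleGraph.fromRel_adj] at he
        obtain ⟨hne, hr⟩ := he
        match u, v with
        | Sum.inl i, Sum.inl j =>
          apply Finset.mem_coe.2
          apply Finset.mem_union_left
          apply Finset.mem_image.2
          exact ⟨(i, j), Finset.mem_offDiag.2 ⟨by simp [hB, hv.1], by simp [hB, hv.2],
            fun h => hne (congrArg Sum.inl h)⟩, rfl⟩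
        | Sum.inl i, Sum.inr p =>
          have : i = p.1 := by
            rcases hr with h | h
            · exact h
            · exact absurd h (by simp [kdRel])
          subst this
          apply Finset.mem_coe.2
          apply Finset.mem_union_right
          exact Finset.mem_image.2 ⟨p, by simp [hP, hv.2], rfl⟩
        | Sum.inr p, Sum.inl i =>
          have : i = p.1 := by
            rcases hr with h | h
            · exact absurd h (by simp [kdRel])
            · exact h
          subst this
          apply Finset.mem_coe.2
          apply Finset.mem_union_right
          refine Finset.mem_image.2 ⟨p, by simp [hP, hv.1], ?_⟩
          rw [Sym2.eq_swap]
        | Sum.inr p, Sum.inr q =>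
          rcases hr with h | h <;> exact absurd h (by simp [kdRel])
    have hcard : {e ∈ (KD Δ t).edgeSet | ∀ v ∈ e, v ∈ A}.ncard ≤ B.card.choose 2 + P.card := by
      calc {e ∈ (KD Δ t).edgeSet | ∀ v ∈ e, v ∈ A}.ncard ≤ (↑F : Set (Sym2 V)).ncard :=
            Set.ncard_le_ncard hsub (Finset.finite_toSet F)
        _ = F.card := Set.ncard_coe_finset F
        _ ≤ (B.offDiag.image (fun q => s(Sum.inl q.1, Sum.inl q.2))).card +
              (P.image (fun p => s(Sum.inl p.1, Sum.inr p))).card := Finset.card_union_le _ _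
        _ ≤ B.card.choose 2 + P.card := by
            gcongr
            · have h1 : (B.offDiag.image (fun q : Fin t × Fin t => s(Sum.inl q.1, Sum.inl q.2)))
                  = (B.offDiag.image Sym2.mk.uncurry).image (Sym2.map (Sum.inl : Fin t → V)) := by
                rw [Finset.image_image]
                rfl
              rw [h1, Finset.card_image_of_injective _ (Sym2.map.injective Sum.inl_injective),
                Sym2.card_image_offDiag]
            · exact Finset.card_image_le
    -- cardinality of A
    have hAcard : B.card + P.card ≤ A.card := by
      have hsubA : (B.image (Sum.inl : Fin t → V) ∪ P.image Sum.inr) ⊆ A := by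
        intro v hv
        rcases Finset.mem_union.1 hv with h | h
        · obtain ⟨i, hi, rfl⟩ := Finset.mem_image.1 h
          exact (Finset.mem_filter.1 hi).2
        · obtain ⟨p, hp, rfl⟩ := Finset.mem_image.1 h
          exact (Finset.mem_filter.1 hp).2
      have hdisj : Disjoint (B.image (Sum.inl : Fin t → V)) (P.image Sum.inr) := by
        apply Finset.disjoint_left.2
        rintro v hv1 hv2
        obtain ⟨i, _, rfl⟩ := Finset.mem_image.1 hv1
        obtain ⟨p, _, h⟩ := Finset.mem_image.1 hv2
        exact Sum.inl_ne_inr h.symm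
      have e1 : (B.image (Sum.inl : Fin t → V)).card = B.card :=
        Finset.card_image_of_injective _ Sum.inl_injective
      have e2 : (P.image (Sum.inr : Fin t × Fin (Δ + 1 - t) → V)).card = P.card :=
        Finset.card_image_of_injective _ Sum.inr_injective
      calc B.card + P.card
          = (B.image (Sum.inl : Fin t → V) ∪ P.image Sum.inr).card := by
            rw [Finset.card_union_of_disjoint hdisj, e1, e2]
        _ ≤ A.card := Finset.card_le_card hsubA
    have hnat : 2 * {e ∈ (KD Δ t).edgeSet | ∀ v ∈ e, v ∈ A}.ncard ≤ (t - 1) * A.card := by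
      have hBt : B.card ≤ t := by
        calc B.card ≤ (Finset.univ : Finset (Fin t)).card := Finset.card_le_card (Finset.filter_subset _ _)
          _ = t := by simp
      calc 2 * {e ∈ (KD Δ t).edgeSet | ∀ v ∈ e, v ∈ A}.ncard
          ≤ 2 * (B.card.choose 2 + P.card) := by omega
        _ = B.card * (B.card - 1) + 2 * P.card := by rw [Nat.mul_add, two_mul_choose_two]
        _ ≤ B.card * (t - 1) + (t - 1) * P.card := by
            have h1 : B.card * (B.card - 1) ≤ B.card * (t - 1) :=
              Nat.mul_le_mul_left _ (by omega)
            have h2 : 2 * P.card ≤ (t - 1) * P.card :=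
              Nat.mul_le_mul_right _ (by omega)
            omega
        _ = (t - 1) * (B.card + P.card) := by ring
        _ ≤ (t - 1) * A.card := by gcongr
    -- now pass to ℝ
    have hApos : (0 : ℝ) < A.card := by exact_mod_cast Finset.card_pos.2 hA
    rw [div_le_iff₀ hApos]
    have : ((2 * {e ∈ (KD Δ t).edgeSet | ∀ v ∈ e, v ∈ A}.ncard : ℕ) : ℝ)
        ≤ (((t - 1) * A.card : ℕ) : ℝ) := by exact_mod_cast hnat
    push_cast [Nat.cast_sub (by omega : 1 ≤ t)] at this
    linarith
  -- Lower bound: t - 1 is attained by the clique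
  have hmem : (t : ℝ) - 1 ∈ S := by
    refine ⟨Finset.univ.image Sum.inl, ⟨Sum.inl ⟨0, htpos⟩, by simp⟩, ?_⟩
    set A : Finset V := Finset.univ.image Sum.inl with hA
    have hAcard : A.card = t := by
      rw [hA, Finset.card_image_of_injective _ Sum.inl_injective, Finset.card_univ, Fintype.card_fin]
    have hset : {e ∈ (KD Δ t).edgeSet | ∀ v ∈ e, v ∈ A}
        = ↑((Finset.univ : Finset (Fin t)).offDiag.image
            (fun q => s(Sum.inl q.1, Sum.inl q.2)) : Finset (Sym2 V)) := by
      ext e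
      induction e with
      | _ u v =>
        simp only [Set.mem_setOf_eq, Sym2.ball, SimpleGraph.mem_edgeSet, KD,
          SimpleGraph.fromRel_adj, Finset.mem_coe, Finset.mem_image]
        constructor
        · rintro ⟨⟨hne, _⟩, hu, hv⟩
          obtain ⟨i, -, rfl⟩ := Finset.mem_image.1 hu
          obtain ⟨j, -, rfl⟩ := Finset.mem_image.1 hv
          exact ⟨(i, j), Finset.mem_offDiag.2 ⟨Finset.mem_univ _, Finset.mem_univ _,
            fun h => hne (congrArg Sum.inl h)⟩, rfl⟩
        · rintro ⟨⟨i, j⟩, hij, h⟩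
          have hne : i ≠ j := (Finset.mem_offDiag.1 hij).2.2
          rw [Sym2.eq_iff] at h
          rcases h with ⟨h1, h2⟩ | ⟨h1, h2⟩
          · subst h1; subst h2
            exact ⟨⟨fun hh => hne (Sum.inl_injective hh), Or.inl trivial⟩,
              by simp [hA], by simp [hA]⟩
          · subst h1; subst h2
            exact ⟨⟨fun hh => hne.symm (Sum.inl_injective hh), Or.inl trivial⟩,
              by simp [hA], by simp [hA]⟩
    have hcount : {e ∈ (KD Δ t).edgeSet | ∀ v ∈ e, v ∈ A}.ncard = t.choose 2 := by
      rw [hset, Set.ncard_coe_finset]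
      have h1 : ((Finset.univ : Finset (Fin t)).offDiag.image
            (fun q : Fin t × Fin t => s(Sum.inl q.1, Sum.inl q.2)) : Finset (Sym2 V))
          = ((Finset.univ : Finset (Fin t)).offDiag.image Sym2.mk.uncurry).image
              (Sym2.map (Sum.inl : Fin t → V)) := by
        rw [Finset.image_image]; rfl
      rw [h1, Finset.card_image_of_injective _ (Sym2.map.injective Sum.inl_injective),
        Sym2.card_image_offDiag, Finset.card_univ, Fintype.card_fin]
    rw [hcount, hAcard]
    have h2 : (2 * t.choose 2 : ℝ) = t * (t - 1) := by
      have := two_mul_choose_two t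
      have : ((2 * t.choose 2 : ℕ) : ℝ) = ((t * (t - 1) : ℕ) : ℝ) := by exact_mod_cast this
      push_cast [Nat.cast_sub (by omega : 1 ≤ t)] at this
      linarith
    rw [eq_div_iff (by positivity : (t : ℝ) ≠ 0)]
    nlinarith [h2]
  have hne : S.Nonempty := ⟨_, hmem⟩
  have hbdd : BddAbove S := ⟨(t : ℝ) - 1, hub⟩
  exact le_antisymm (csSup_le hne hub) (le_csSup hbdd hmem)

end StrongEC
end

section
/- Let Δ ≥ 7 be an integer and let G be a minimal counterexample to the bound χ'_s ≤ 3Δ for graphs with Mad ≤ 3, maximum degree at most Δ, and no 3-regular subgraph. Then every poor 3-vertex of G* is adjacent in G* to at least one vertex of degree at least 4 in G*. -/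
open scoped Classical

namespace StrongEC

/-- `G` has a 3-regular subgraph: a subgraph on a nonempty vertex set all of whose
vertices have degree exactly 3 in it. -/
def Has3RegularSubgraph {V : Type*} (G : SimpleGraph V) : Prop :=
  ∃ H : SimpleGraph V, H ≤ G ∧ H.support.Nonempty ∧
    ∀ v ∈ H.support, (H.neighborSet v).ncard = 3

/-- The graph `G*` obtained from `G` by deleting all vertices of degree 1 in `G`. -/
noncomputable def core {V : Type*} [Fintype V] (G : SimpleGraph V) : SimpleGraph V :=
  SimpleGraph.fromRel (fun u v => G.Adj u v ∧ G.degree u ≠ 1 ∧ G.degree v ≠ 1)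

/-- The number of vertices of degree at least 2. -/
noncomputable def twoPlusCount {W : Type} [Fintype W] (H : SimpleGraph W) : ℕ :=
  (Finset.univ.filter (fun v : W => 2 ≤ H.degree v)).card

/-- A graph with maximum average degree at most `3`, maximum degree at most `Δ`, and no
3-regular subgraph. -/
def GoodB (Δ : ℕ) {W : Type} [Fintype W] (H : SimpleGraph W) : Prop :=
  mad H ≤ 3 ∧ H.maxDegree ≤ Δ ∧ ¬ Has3RegularSubgraph H

/-- `G` is a minimal counterexample to the bound `χ'_s ≤ 3Δ` for graphs with `Mad ≤ 3`,
maximum degree at most `Δ` and no 3-regular subgraph. -/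
def MinCexB (Δ : ℕ) {V : Type} [Fintype V] (G : SimpleGraph V) : Prop :=
  GoodB Δ G ∧ ¬ HasStrongColoring G (3 * Δ) ∧
    ∀ (W : Type) [Fintype W] (H : SimpleGraph W), GoodB Δ H →
      (twoPlusCount H < twoPlusCount G ∨
        (twoPlusCount H = twoPlusCount G ∧ H.edgeSet.ncard < G.edgeSet.ncard)) →
      HasStrongColoring H (3 * Δ)

/-- A poor 3-vertex: a vertex of degree 3 in `G*` exactly one of whose neighbors in `G*`
has degree 2 in `G*`. -/
def Poor3 {V : Type} [Fintype V] (G : SimpleGraph V) (v : V) : Prop :=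
  (core G).degree v = 3 ∧
    (((core G).neighborFinset v).filter (fun u => (core G).degree u = 2)).card = 1

/-! ### Auxiliary material -/

section Aux

variable {V : Type} [Fintype V]

lemma Conflict.symm2 {G : SimpleGraph V} {e e' : Sym2 V} (h : Conflict G e e') :
    Conflict G e' e := by
  obtain ⟨hne, h⟩ := h
  refine ⟨hne.symm, ?_⟩
  rcases h with ⟨z, hz1, hz2⟩ | ⟨f, hf, ⟨z1, h1, h2⟩, ⟨z2, h3, h4⟩⟩
  · exact Or.inl ⟨z, hz2, hz1⟩
  · exact Or.inr ⟨f, hf, ⟨z2, h3, h4⟩, ⟨z1, h1, h2⟩⟩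

/-- Any edge in conflict with `s(a,b)` has an endpoint in `N[a] ∪ N[b]`. -/
lemma conflict_cover {G : SimpleGraph V} {a b : V} {e' : Sym2 V}
    (h : Conflict G s(a, b) e') :
    e' ≠ s(a, b) ∧ ∃ z ∈ e', z = a ∨ z = b ∨ G.Adj a z ∨ G.Adj b z := by
  obtain ⟨hne, h⟩ := h
  refine ⟨hne.symm, ?_⟩
  rcases h with ⟨z, hz1, hz2⟩ | ⟨f, hf, ⟨z1, h1, h2⟩, ⟨z2, h3, h4⟩⟩
  · rcases Sym2.mem_iff.1 hz1 with rfl | rfl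
    · exact ⟨z, hz2, Or.inl rfl⟩
    · exact ⟨z, hz2, Or.inr (Or.inl rfl)⟩
  · refine ⟨z2, h3, ?_⟩
    by_cases hzz : z1 = z2
    · subst hzz
      rcases Sym2.mem_iff.1 h1 with rfl | rfl
      · exact Or.inl rfl
      · exact Or.inr (Or.inl rfl)
    · have hadj : G.Adj z1 z2 := by
        rw [(Sym2.mem_and_mem_iff hzz).1 ⟨h2, h4⟩] at hf
        exact G.mem_edgeSet.1 hf
      rcases Sym2.mem_iff.1 h1 with rfl | rfl
      · exact Or.inr (Or.inr (Or.inl hadj))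
      · exact Or.inr (Or.inr (Or.inr hadj))

/-- The set of edges of `G` incident to `a`. -/
noncomputable def edgesAt (G : SimpleGraph V) (a : V) : Finset (Sym2 V) :=
  (G.neighborFinset a).image (fun x => s(a, x))

lemma mem_edgesAt {G : SimpleGraph V} {a : V} {e : Sym2 V} :
    e ∈ edgesAt G a ↔ ∃ x, G.Adj a x ∧ e = s(a, x) := by
  simp only [edgesAt, Finset.mem_image, SimpleGraph.mem_neighborFinset]
  constructor
  · rintro ⟨x, hx, rfl⟩; exact ⟨x, hx, rfl⟩
  · rintro ⟨x, hx, rfl⟩; exact ⟨x, hx, rfl⟩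

lemma card_edgesAt (G : SimpleGraph V) (a : V) : (edgesAt G a).card = G.degree a := by
  rw [edgesAt, Finset.card_image_of_injOn, SimpleGraph.card_neighborFinset_eq_degree]
  intro x _ y _ hxy
  exact Sym2.congr_right.1 hxy

lemma mem_edgesAt_of_mem {G : SimpleGraph V} {a : V} {e : Sym2 V}
    (he : e ∈ G.edgeSet) (ha : a ∈ e) : e ∈ edgesAt G a := by
  induction e with
  | _ p q =>
    have hpq : G.Adj p q := G.mem_edgeSet.1 he
    rcases Sym2.mem_iff.1 ha with rfl | rfl
    · exact mem_edgesAt.2 ⟨q, hpq, rfl⟩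
    · exact mem_edgesAt.2 ⟨p, hpq.symm, Sym2.eq_swap⟩

lemma edgesAt_sub_edgeSet {G : SimpleGraph V} {a : V} : ∀ e ∈ edgesAt G a, e ∈ G.edgeSet := by
  intro e he
  obtain ⟨x, hx, rfl⟩ := mem_edgesAt.1 he
  exact G.mem_edgeSet.2 hx

/-- Greedy extension lemma. -/
lemma greedy {k : ℕ} (G : SimpleGraph V) (L : List (Sym2 V)) :
    ∀ (S : Finset (Sym2 V)) (C : Sym2 V → Fin k),
    (∀ e ∈ S, ∀ e' ∈ S, Conflict G e e' → C e ≠ C e') →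
    (∀ (L₁ L₂ : List (Sym2 V)) (e : Sym2 V), L = L₁ ++ e :: L₂ →
      ((S ∪ L₁.toFinset).filter (fun e' => Conflict G e e')).card < k) →
    ∃ C' : Sym2 V → Fin k, ∀ e ∈ S ∪ L.toFinset, ∀ e' ∈ S ∪ L.toFinset,
      Conflict G e e' → C' e ≠ C' e' := by
  induction L with
  | nil =>
    intro S C hC _
    exact ⟨C, by simpa using hC⟩
  | cons e L ih =>
    intro S C hC hB
    have hb : (S.filter (fun e' => Conflict G e e')).card < k := by
      have := hB [] L e rfl
      simpa using this
    have him : ((S.filter (fun e' => Conflict G e e')).image C).card < k :=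
      lt_of_le_of_lt (Finset.card_image_le) hb
    have hne : (Finset.univ \ ((S.filter (fun e' => Conflict G e e')).image C)).Nonempty := by
      rw [← Finset.card_pos, Finset.card_sdiff_of_subset (Finset.subset_univ _), Finset.card_univ,
        Fintype.card_fin]
      omega
    obtain ⟨c, hc⟩ := hne
    rw [Finset.mem_sdiff] at hc
    set C' : Sym2 V → Fin k := Function.update C e c with hC'def
    have key : ∀ b ∈ S, Conflict G e b → c ≠ C b := by
      intro b hb' hab h
      exact hc.2 (Finset.mem_image.2 ⟨b, Finset.mem_filter.2 ⟨hb', hab⟩, h.symm⟩)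
    have hgood : ∀ a ∈ insert e S, ∀ b ∈ insert e S, Conflict G a b → C' a ≠ C' b := by
      intro a ha b hb' hab
      by_cases hae : a = e <;> by_cases hbe : b = e
      · exact absurd (hae.trans hbe.symm) hab.1
      · have hb2 : b ∈ S := Finset.mem_of_mem_insert_of_ne hb' hbe
        rw [hC'def, hae, Function.update_self, Function.update_of_ne hbe]
        exact key b hb2 (hae ▸ hab)
      · have ha2 : a ∈ S := Finset.mem_of_mem_insert_of_ne ha hae
        rw [hC'def, hbe, Function.update_self, Function.update_of_ne hae]
        exact fun h => (key a ha2 (hbe ▸ hab.symm2)) h.symm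
      · have ha2 : a ∈ S := Finset.mem_of_mem_insert_of_ne ha hae
        have hb2 : b ∈ S := Finset.mem_of_mem_insert_of_ne hb' hbe
        rw [hC'def, Function.update_of_ne hae, Function.update_of_ne hbe]
        exact hC a ha2 b hb2 hab
    have hB' : ∀ (L₁ L₂ : List (Sym2 V)) (e₀ : Sym2 V), L = L₁ ++ e₀ :: L₂ →
        (((insert e S) ∪ L₁.toFinset).filter (fun e' => Conflict G e₀ e')).card < k := by
      intro L₁ L₂ e₀ h
      have := hB (e :: L₁) L₂ e₀ (by rw [h]; rfl)
      have hset : (insert e S) ∪ L₁.toFinset = S ∪ (e :: L₁).toFinset := by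
        ext x; simp <;> tauto
      rw [hset]
      exact this
    obtain ⟨C'', hC''⟩ := ih (insert e S) C' hgood hB'
    refine ⟨C'', ?_⟩
    have hset2 : S ∪ (e :: L).toFinset = (insert e S) ∪ L.toFinset := by
      ext x; simp <;> tauto
    rw [hset2]
    exact hC''

lemma madSet_finite (G : SimpleGraph V) : {x : ℝ | ∃ A : Finset V, A.Nonempty ∧
    x = 2 * ({e ∈ G.edgeSet | ∀ v ∈ e, v ∈ A}.ncard : ℝ) / (A.card : ℝ)}.Finite := by
  have : {x : ℝ | ∃ A : Finset V, A.Nonempty ∧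
      x = 2 * ({e ∈ G.edgeSet | ∀ v ∈ e, v ∈ A}.ncard : ℝ) / (A.card : ℝ)} ⊆
      (fun A : Finset V => 2 * ({e ∈ G.edgeSet | ∀ v ∈ e, v ∈ A}.ncard : ℝ) / (A.card : ℝ)) ''
        Set.univ := by
    rintro x ⟨A, -, rfl⟩
    exact ⟨A, Set.mem_univ _, rfl⟩
  exact Set.Finite.subset (Set.Finite.image _ Set.finite_univ) this

lemma mad_mono {G H : SimpleGraph V} [Nonempty V] (h : H ≤ G) : mad H ≤ mad G := by
  apply Real.sSup_le
  · rintro x ⟨A, hA, rfl⟩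
    have hsub : {e ∈ H.edgeSet | ∀ v ∈ e, v ∈ A} ⊆ {e ∈ G.edgeSet | ∀ v ∈ e, v ∈ A} := by
      rintro e ⟨he, hv⟩
      exact ⟨SimpleGraph.edgeSet_mono h he, hv⟩
    have hle : ({e ∈ H.edgeSet | ∀ v ∈ e, v ∈ A}.ncard : ℝ) ≤
        ({e ∈ G.edgeSet | ∀ v ∈ e, v ∈ A}.ncard : ℝ) := by
      exact_mod_cast Set.ncard_le_ncard hsub (Set.toFinite _)
    calc 2 * ({e ∈ H.edgeSet | ∀ v ∈ e, v ∈ A}.ncard : ℝ) / (A.card : ℝ)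
        ≤ 2 * ({e ∈ G.edgeSet | ∀ v ∈ e, v ∈ A}.ncard : ℝ) / (A.card : ℝ) := by
          gcongr
      _ ≤ mad G := le_csSup (madSet_finite G).bddAbove ⟨A, hA, rfl⟩
  · have : (0:ℝ) ≤ 2 * ({e ∈ G.edgeSet | ∀ v ∈ e, v ∈ (Finset.univ : Finset V)}.ncard : ℝ) /
        ((Finset.univ : Finset V).card : ℝ) := by positivity
    exact this.trans (le_csSup (madSet_finite G).bddAbove
      ⟨Finset.univ, Finset.univ_nonempty, rfl⟩)

lemma degree_mono {G H : SimpleGraph V} (h : H ≤ G) (x : V) : H.degree x ≤ G.degree x := by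
  rw [← SimpleGraph.card_neighborFinset_eq_degree, ← SimpleGraph.card_neighborFinset_eq_degree]
  apply Finset.card_le_card
  intro y hy
  rw [SimpleGraph.mem_neighborFinset] at hy ⊢
  exact h hy

lemma maxDegree_mono {G H : SimpleGraph V} (h : H ≤ G) : H.maxDegree ≤ G.maxDegree :=
  H.maxDegree_le_of_forall_degree_le _ fun v => (degree_mono h v).trans (G.degree_le_maxDegree v)

lemma twoPlus_mono {G H : SimpleGraph V} (h : H ≤ G) : twoPlusCount H ≤ twoPlusCount G := by
  apply Finset.card_le_card
  apply Finset.monotone_filter_right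
  intro v _ hv
  exact le_trans hv (degree_mono h v)

lemma mem_nbr {G : SimpleGraph V} {a b : V} : b ∈ G.neighborFinset a ↔ G.Adj a b := by
  rw [SimpleGraph.mem_neighborFinset]

lemma h3reg_mono {G H : SimpleGraph V} (h : H ≤ G) (hG : ¬ Has3RegularSubgraph G) :
    ¬ Has3RegularSubgraph H := by
  rintro ⟨K, hK, hs, hd⟩
  exact hG ⟨K, hK.trans h, hs, hd⟩

lemma core_adj {G : SimpleGraph V} {a b : V} :
    (core G).Adj a b ↔ G.Adj a b ∧ G.degree a ≠ 1 ∧ G.degree b ≠ 1 := by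
  rw [core, SimpleGraph.fromRel_adj]
  constructor
  · rintro ⟨hne, ⟨h1, h2, h3⟩ | ⟨h1, h2, h3⟩⟩
    · exact ⟨h1, h2, h3⟩
    · exact ⟨h1.symm, h3, h2⟩
  · rintro ⟨h1, h2, h3⟩
    exact ⟨h1.ne, Or.inl ⟨h1, h2, h3⟩⟩

/-- The list of pendant edges at `a`. -/
noncomputable def pendList (G : SimpleGraph V) (a : V) : List (Sym2 V) :=
  (((G.neighborFinset a).filter (fun x => G.degree x = 1)).toList).map (fun x => s(a, x))

lemma mem_pendList {G : SimpleGraph V} {a : V} {e : Sym2 V} :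
    e ∈ pendList G a ↔ ∃ x, G.Adj a x ∧ G.degree x = 1 ∧ e = s(a, x) := by
  simp only [pendList, List.mem_map, Finset.mem_toList, Finset.mem_filter,
    SimpleGraph.mem_neighborFinset]
  constructor
  · rintro ⟨x, ⟨hx, hd⟩, rfl⟩; exact ⟨x, hx, hd, rfl⟩
  · rintro ⟨x, hx, hd, rfl⟩; exact ⟨x, ⟨hx, hd⟩, rfl⟩

lemma pendList_ne_core {G : SimpleGraph V} {a p q : V} {e : Sym2 V}
    (he : e ∈ pendList G a) (hp : G.degree p ≠ 1) (hq : G.degree q ≠ 1) : e ≠ s(p, q) := by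
  obtain ⟨x, _, hd, rfl⟩ := mem_pendList.1 he
  intro h
  rw [Sym2.eq_iff] at h
  rcases h with ⟨rfl, rfl⟩ | ⟨rfl, rfl⟩
  · exact hq hd
  · exact hp hd

lemma pendList_disj {G : SimpleGraph V} {a b : V} {e : Sym2 V} (hab : a ≠ b)
    (ha : G.degree a ≠ 1) (he : e ∈ pendList G a) : e ∉ pendList G b := by
  obtain ⟨x, _, hd, rfl⟩ := mem_pendList.1 he
  intro h
  obtain ⟨y, _, hdy, hxy⟩ := mem_pendList.1 h
  rw [Sym2.eq_iff] at hxy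
  rcases hxy with ⟨h1, h2⟩ | ⟨h1, h2⟩
  · exact hab h1
  · exact ha (h1 ▸ hdy)

lemma pendList_mem_edgesAt {G : SimpleGraph V} {a : V} {e : Sym2 V}
    (he : e ∈ pendList G a) : e ∈ edgesAt G a := by
  obtain ⟨x, hx, _, rfl⟩ := mem_pendList.1 he
  exact mem_edgesAt.2 ⟨x, hx, rfl⟩

lemma pendant_unique {G : SimpleGraph V} {z a : V} (hdz : G.degree z = 1) (ha : G.Adj a z)
    {e : Sym2 V} (he : e ∈ G.edgeSet) (hz : z ∈ e) : e = s(a, z) := by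
  obtain ⟨y, hy, rfl⟩ := mem_edgesAt.1 (mem_edgesAt_of_mem he hz)
  obtain ⟨c, hc⟩ := Finset.card_eq_one.1
    ((SimpleGraph.card_neighborFinset_eq_degree G z).trans hdz)
  have hac : a ∈ G.neighborFinset z := mem_nbr.2 ha.symm
  have hyc : y ∈ G.neighborFinset z := mem_nbr.2 hy
  rw [hc, Finset.mem_singleton] at hac hyc
  rw [hyc, ← hac, Sym2.eq_swap]

lemma pend_nbr {G : SimpleGraph V} {x a z : V} (hdx : G.degree x = 1) (ha : G.Adj a x)
    (hz : G.Adj x z) : z = a := by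
  obtain ⟨c, hc⟩ := Finset.card_eq_one.1
    ((SimpleGraph.card_neighborFinset_eq_degree G x).trans hdx)
  have hac : a ∈ G.neighborFinset x := mem_nbr.2 ha.symm
  have hzc : z ∈ G.neighborFinset x := mem_nbr.2 hz
  rw [hc, Finset.mem_singleton] at hac hzc
  rw [hzc, hac]

lemma card_le_three {α : Type*} [DecidableEq α] (a b c : α) :
    ({a, b, c} : Finset α).card ≤ 3 := by
  apply (Finset.card_insert_le _ _).trans
  apply Nat.succ_le_succ
  apply (Finset.card_insert_le _ _).trans
  simp

lemma card_le_two {α : Type*} [DecidableEq α] (a b : α) :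
    ({a, b} : Finset α).card ≤ 2 :=
  (Finset.card_insert_le _ _).trans (by simp)

lemma list_prefix_sub {α : Type*} {L₁ L₂ A B : List α} {e : α}
    (h : L₁ ++ e :: L₂ = A ++ B) (he : e ∉ B) : ∀ x ∈ L₁, x ∈ A := by
  rcases List.append_eq_append_iff.1 h with ⟨a', ha', -⟩ | ⟨c', hc', hB⟩
  · intro x hx
    rw [ha']
    exact List.mem_append_left _ hx
  · exfalso
    apply he
    rw [hB]
    exact List.mem_append_right _ (List.mem_cons_self)

end Aux

set_option maxHeartbeats 1000000 in
/-- In a minimal counterexample `G` to `χ'_s ≤ 3Δ` (`Mad ≤ 3`, maximum degree at most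
`Δ ≥ 7`, no 3-regular subgraph), every poor 3-vertex of `G*` has a neighbor of degree
at least 4 in `G*`. -/
theorem minCexB_poor3_has_big_neighbor (Δ : ℕ) (hΔ : 7 ≤ Δ) {V : Type} [Fintype V]
    (G : SimpleGraph V) (hG : MinCexB Δ G) :
    ∀ v : V, Poor3 G v → ∃ u, (core G).Adj v u ∧ 4 ≤ (core G).degree u := by
  intro v hpoor
  by_contra hbig
  push_neg at hbig
  obtain ⟨⟨hmad, hmax, h3reg⟩, hnc, hmin⟩ := hG
  obtain ⟨hdeg3, hfilt⟩ := hpoor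
  have degAll : ∀ x, G.degree x ≤ Δ := fun x => (G.degree_le_maxDegree x).trans hmax
  -- extract t
  have hN : ((core G).neighborFinset v).card = 3 := by
    rw [SimpleGraph.card_neighborFinset_eq_degree]; exact hdeg3
  obtain ⟨t, ht⟩ := Finset.card_eq_one.1 hfilt
  have htmem' : t ∈ (((core G).neighborFinset v).filter
      (fun u => (core G).degree u = 2)) := ht ▸ Finset.mem_singleton_self t
  have htmem : t ∈ (core G).neighborFinset v := (Finset.mem_filter.1 htmem').1
  have htdeg : (core G).degree t = 2 := (Finset.mem_filter.1 htmem').2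
  -- extract u, w
  have h2 : (((core G).neighborFinset v).erase t).card = 2 := by
    rw [Finset.card_erase_of_mem htmem, hN]
  obtain ⟨u, w, huw, huwset⟩ := Finset.card_eq_two.1 h2
  have humem' : u ∈ (((core G).neighborFinset v).erase t) := by
    rw [huwset]; exact Finset.mem_insert_self u {w}
  have hwmem' : w ∈ (((core G).neighborFinset v).erase t) := by
    rw [huwset]; exact Finset.mem_insert_of_mem (Finset.mem_singleton_self w)
  have humem : u ∈ (core G).neighborFinset v := Finset.mem_of_mem_erase humem'
  have hwmem : w ∈ (core G).neighborFinset v := Finset.mem_of_mem_erase hwmem'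
  have hut : u ≠ t := (Finset.mem_erase.1 humem').1
  have hwt : w ≠ t := (Finset.mem_erase.1 hwmem').1
  have hNeq : (core G).neighborFinset v = {t, u, w} := by
    rw [← Finset.insert_erase htmem, huwset]
  -- core adjacencies
  have hcvt : (core G).Adj v t := mem_nbr.1 htmem
  have hcvu : (core G).Adj v u := mem_nbr.1 humem
  have hcvw : (core G).Adj v w := mem_nbr.1 hwmem
  have hvt : G.Adj v t := (core_adj.1 hcvt).1
  have hvu : G.Adj v u := (core_adj.1 hcvu).1
  have hvw : G.Adj v w := (core_adj.1 hcvw).1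
  have hdv : G.degree v ≠ 1 := (core_adj.1 hcvt).2.1
  have hdt : G.degree t ≠ 1 := (core_adj.1 hcvt).2.2
  have hdu : G.degree u ≠ 1 := (core_adj.1 hcvu).2.2
  have hdw : G.degree w ≠ 1 := (core_adj.1 hcvw).2.2
  have hvnet : v ≠ t := hvt.ne
  have hvneu : v ≠ u := hvu.ne
  have hvnew : v ≠ w := hvw.ne
  -- t' : the other core-neighbor of t
  have htN : ((core G).neighborFinset t).card = 2 := by
    rw [SimpleGraph.card_neighborFinset_eq_degree]; exact htdeg
  have hvmemt : v ∈ (core G).neighborFinset t := mem_nbr.2 hcvt.symm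
  have ht1 : (((core G).neighborFinset t).erase v).card = 1 := by
    rw [Finset.card_erase_of_mem hvmemt, htN]
  obtain ⟨t', ht'⟩ := Finset.card_eq_one.1 ht1
  have ht'mem : t' ∈ ((core G).neighborFinset t).erase v := ht' ▸ Finset.mem_singleton_self t'
  have htnbrs : (core G).neighborFinset t = {v, t'} := by
    rw [← Finset.insert_erase hvmemt, ht']
  have hct : (core G).Adj t t' := mem_nbr.1 (Finset.mem_of_mem_erase ht'mem)
  have ht'v : t' ≠ v := (Finset.mem_erase.1 ht'mem).1
  have htt' : G.Adj t t' := (core_adj.1 hct).1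
  have hdt' : G.degree t' ≠ 1 := (core_adj.1 hct).2.2
  -- A_u, A_w : other core-neighbors of u, w
  have hcu3 : (core G).degree u ≤ 3 := by
    have := hbig u hcvu; omega
  have hcw3 : (core G).degree w ≤ 3 := by
    have := hbig w hcvw; omega
  set Au := ((core G).neighborFinset u).erase v with hAudef
  set Aw := ((core G).neighborFinset w).erase v with hAwdef
  have hAu2 : Au.card ≤ 2 := by
    rw [hAudef, Finset.card_erase_of_mem (mem_nbr.2 hcvu.symm),
      SimpleGraph.card_neighborFinset_eq_degree]
    omega
  have hAw2 : Aw.card ≤ 2 := by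
    rw [hAwdef, Finset.card_erase_of_mem (mem_nbr.2 hcvw.symm),
      SimpleGraph.card_neighborFinset_eq_degree]
    omega
  -- neighbor classification
  have hvnbr : ∀ z, G.Adj v z → G.degree z = 1 ∨ z = t ∨ z = u ∨ z = w := by
    intro z hz
    by_cases hdz : G.degree z = 1
    · exact Or.inl hdz
    · right
      have : z ∈ (core G).neighborFinset v :=
        mem_nbr.2 (core_adj.2 ⟨hz, hdv, hdz⟩)
      rw [hNeq] at this
      simpa using this
  have htnbr : ∀ z, G.Adj t z → G.degree z = 1 ∨ z = v ∨ z = t' := by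
    intro z hz
    by_cases hdz : G.degree z = 1
    · exact Or.inl hdz
    · right
      have : z ∈ (core G).neighborFinset t :=
        mem_nbr.2 (core_adj.2 ⟨hz, hdt, hdz⟩)
      rw [htnbrs] at this
      simpa using this
  have hunbr : ∀ z, G.Adj u z → G.degree z = 1 ∨ z = v ∨ z ∈ Au := by
    intro z hz
    by_cases hdz : G.degree z = 1
    · exact Or.inl hdz
    · right
      have hmem : z ∈ (core G).neighborFinset u :=
        mem_nbr.2 (core_adj.2 ⟨hz, hdu, hdz⟩)
      by_cases hzv : z = v
      · exact Or.inl hzv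
      · exact Or.inr (Finset.mem_erase.2 ⟨hzv, hmem⟩)
  have hwnbr : ∀ z, G.Adj w z → G.degree z = 1 ∨ z = v ∨ z ∈ Aw := by
    intro z hz
    by_cases hdz : G.degree z = 1
    · exact Or.inl hdz
    · right
      have hmem : z ∈ (core G).neighborFinset w :=
        mem_nbr.2 (core_adj.2 ⟨hz, hdw, hdz⟩)
      by_cases hzv : z = v
      · exact Or.inl hzv
      · exact Or.inr (Finset.mem_erase.2 ⟨hzv, hmem⟩)
  have hAuadj : ∀ z ∈ Au, G.Adj u z ∧ G.degree z ≠ 1 ∧ z ≠ v := by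
    intro z hz
    obtain ⟨hzv, hmem⟩ := Finset.mem_erase.1 hz
    have := core_adj.1 (mem_nbr.1 hmem)
    exact ⟨this.1, this.2.2, hzv⟩
  have hAwadj : ∀ z ∈ Aw, G.Adj w z ∧ G.degree z ≠ 1 ∧ z ≠ v := by
    intro z hz
    obtain ⟨hzv, hmem⟩ := Finset.mem_erase.1 hz
    have := core_adj.1 (mem_nbr.1 hmem)
    exact ⟨this.1, this.2.2, hzv⟩
  -- the recoloring list
  set L : List (Sym2 V) := s(v,t) :: s(v,u) :: s(v,w) ::
    (pendList G u ++ (pendList G w ++ (pendList G v ++ pendList G t))) with hLdef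
  set Uf : Finset (Sym2 V) := L.toFinset with hUfdef
  set ES : Finset (Sym2 V) := G.edgeSet.toFinset with hESdef
  set S0 : Finset (Sym2 V) := ES \ Uf with hS0def
  have hUES : Uf ⊆ ES := by
    intro e he
    rw [hUfdef, List.mem_toFinset, hLdef] at he
    rw [hESdef, Set.mem_toFinset]
    simp only [List.mem_cons, List.mem_append] at he
    rcases he with rfl | rfl | rfl | he | he | he | he
    · exact G.mem_edgeSet.2 hvt
    · exact G.mem_edgeSet.2 hvu
    · exact G.mem_edgeSet.2 hvw
    all_goals {
      obtain ⟨x, hx, _, rfl⟩ := mem_pendList.1 he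
      exact G.mem_edgeSet.2 hx }
  have hedgesAtv : edgesAt G v ⊆ Uf := by
    intro e he
    obtain ⟨z, hz, rfl⟩ := mem_edgesAt.1 he
    rw [hUfdef, List.mem_toFinset, hLdef]
    simp only [List.mem_cons, List.mem_append]
    rcases hvnbr z hz with hdz | rfl | rfl | rfl
    · have hm : s(v,z) ∈ pendList G v := mem_pendList.2 ⟨z, hz, hdz, rfl⟩
      exact Or.inr (Or.inr (Or.inr (Or.inr (Or.inr (Or.inl hm)))))
    · exact Or.inl rfl
    · exact Or.inr (Or.inl rfl)
    · exact Or.inr (Or.inr (Or.inl rfl))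
  have hS0mem : ∀ e ∈ S0, e ∈ G.edgeSet ∧ e ∉ Uf := by
    intro e he
    rw [hS0def, Finset.mem_sdiff, hESdef, Set.mem_toFinset] at he
    exact he
  have hvtU : s(v,t) ∈ Uf := by
    rw [hUfdef, List.mem_toFinset, hLdef]
    exact List.mem_cons_self
  -- the graph with the edge vt deleted
  set H : SimpleGraph V := G.deleteEdges {s(v,t)} with hHdef
  have hHle : H ≤ G := G.deleteEdges_le _
  have hHedge : H.edgeSet = G.edgeSet \ {s(v,t)} := G.edgeSet_deleteEdges _
  have hNe : Nonempty V := ⟨v⟩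
  have hHgood : GoodB Δ H := ⟨(mad_mono hHle).trans hmad, (maxDegree_mono hHle).trans hmax,
    h3reg_mono hHle h3reg⟩
  have hmeasure : twoPlusCount H < twoPlusCount G ∨
      (twoPlusCount H = twoPlusCount G ∧ H.edgeSet.ncard < G.edgeSet.ncard) := by
    have hle := twoPlus_mono hHle
    rcases lt_or_eq_of_le hle with h | h
    · exact Or.inl h
    · refine Or.inr ⟨h, ?_⟩
      rw [hHedge]
      apply Set.ncard_lt_ncard ?_ (Set.toFinite _)
      constructor
      · exact Set.diff_subset
      · intro hsub
        exact absurd (hsub (G.mem_edgeSet.2 hvt)) (by simp)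
  obtain ⟨C₀, hC₀⟩ := hmin V H hHgood hmeasure
  -- C₀ is good on the kept edges S0, w.r.t. conflicts in G
  have hgood0 : ∀ e ∈ S0, ∀ e' ∈ S0, Conflict G e e' → C₀ e ≠ C₀ e' := by
    intro e he e' he' hc
    obtain ⟨heE, heU⟩ := hS0mem e he
    obtain ⟨heE', heU'⟩ := hS0mem e' he'
    have heH : e ∈ H.edgeSet := by
      rw [hHedge]
      refine ⟨heE, ?_⟩
      intro hmem
      rw [Set.mem_singleton_iff] at hmem
      exact heU (hmem ▸ hvtU)
    have heH' : e' ∈ H.edgeSet := by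
      rw [hHedge]
      refine ⟨heE', ?_⟩
      intro hmem
      rw [Set.mem_singleton_iff] at hmem
      exact heU' (hmem ▸ hvtU)
    apply hC₀ e heH e' heH'
    obtain ⟨hne, hcc⟩ := hc
    refine ⟨hne, ?_⟩
    rcases hcc with ⟨z, h1, h2⟩ | ⟨f, hf, ⟨z1, h1, h2⟩, ⟨z2, h3, h4⟩⟩
    · exact Or.inl ⟨z, h1, h2⟩
    · by_cases hfvt : f = s(v,t)
      · subst hfvt
        have h5 : z1 = t := by
          rcases Sym2.mem_iff.1 h2 with rfl | rfl
          · exact absurd (hedgesAtv (mem_edgesAt_of_mem heE h1)) heU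
          · rfl
        have h6 : z2 = t := by
          rcases Sym2.mem_iff.1 h4 with rfl | rfl
          · exact absurd (hedgesAtv (mem_edgesAt_of_mem heE' h3)) heU'
          · rfl
        exact Or.inl ⟨t, h5 ▸ h1, h6 ▸ h3⟩
      · refine Or.inr ⟨f, ?_, ⟨z1, h1, h2⟩, ⟨z2, h3, h4⟩⟩
        rw [hHedge]
        exact ⟨hf, by simpa using hfvt⟩
  -- stage prefix lists
  set P1 : List (Sym2 V) := [s(v,t), s(v,u), s(v,w)] with hP1
  set P2 : List (Sym2 V) := P1 ++ pendList G u with hP2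
  set P3 : List (Sym2 V) := P2 ++ pendList G w with hP3
  set P4 : List (Sym2 V) := P3 ++ pendList G v with hP4
  -- general helpers for the counting bounds
  have hplvU : ∀ e' ∈ pendList G v, e' ∈ Uf := by
    intro e' h
    rw [hUfdef, List.mem_toFinset, hLdef]
    simp only [List.mem_cons, List.mem_append]
    exact Or.inr (Or.inr (Or.inr (Or.inr (Or.inr (Or.inl h)))))
  have hpluU : ∀ e' ∈ pendList G u, e' ∈ Uf := by
    intro e' h
    rw [hUfdef, List.mem_toFinset, hLdef]
    simp only [List.mem_cons, List.mem_append]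
    exact Or.inr (Or.inr (Or.inr (Or.inl h)))
  have hplwU : ∀ e' ∈ pendList G w, e' ∈ Uf := by
    intro e' h
    rw [hUfdef, List.mem_toFinset, hLdef]
    simp only [List.mem_cons, List.mem_append]
    exact Or.inr (Or.inr (Or.inr (Or.inr (Or.inl h))))
  have hpltU : ∀ e' ∈ pendList G t, e' ∈ Uf := by
    intro e' h
    rw [hUfdef, List.mem_toFinset, hLdef]
    simp only [List.mem_cons, List.mem_append]
    exact Or.inr (Or.inr (Or.inr (Or.inr (Or.inr (Or.inr h)))))
  have hP1Uf : P1.toFinset ⊆ Uf := by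
    intro x hx
    rw [List.mem_toFinset, hP1] at hx
    rw [hUfdef, List.mem_toFinset, hLdef]
    simp only [List.mem_cons, List.mem_append]
    simp only [List.mem_cons, List.not_mem_nil, or_false] at hx
    rcases hx with rfl | rfl | rfl
    · exact Or.inl rfl
    · exact Or.inr (Or.inl rfl)
    · exact Or.inr (Or.inr (Or.inl rfl))
  have hP2Uf : P2.toFinset ⊆ Uf := by
    intro x hx
    rw [List.mem_toFinset, hP2, List.mem_append] at hx
    rcases hx with hx | hx
    · exact hP1Uf (List.mem_toFinset.2 hx)
    · exact hpluU x hx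
  have hP3Uf : P3.toFinset ⊆ Uf := by
    intro x hx
    rw [List.mem_toFinset, hP3, List.mem_append] at hx
    rcases hx with hx | hx
    · exact hP2Uf (List.mem_toFinset.2 hx)
    · exact hplwU x hx
  have hP4Uf : P4.toFinset ⊆ Uf := by
    intro x hx
    rw [List.mem_toFinset, hP4, List.mem_append] at hx
    rcases hx with hx | hx
    · exact hP3Uf (List.mem_toFinset.2 hx)
    · exact hplvU x hx
  have hPES : ∀ (X : Finset (Sym2 V)), X ⊆ Uf → ∀ e' ∈ S0 ∪ X, e' ∈ G.edgeSet := by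
    intro X hX e' h
    rcases Finset.mem_union.1 h with h | h
    · exact (hS0mem e' h).1
    · have := hUES (hX h)
      rw [hESdef, Set.mem_toFinset] at this
      exact this
  -- stage classification of colored special edges
  have hnoP1 : ∀ e' ∈ S0 ∪ P1.toFinset, e' ∈ Uf →
      e' = s(v,t) ∨ e' = s(v,u) ∨ e' = s(v,w) := by
    intro e' h hU
    rcases Finset.mem_union.1 h with h | h
    · exact absurd hU (hS0mem e' h).2
    · rw [List.mem_toFinset, hP1] at h
      simpa using h
  have hnoP2 : ∀ e' ∈ S0 ∪ P2.toFinset, e' ∈ Uf →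
      (e' = s(v,t) ∨ e' = s(v,u) ∨ e' = s(v,w)) ∨ e' ∈ pendList G u := by
    intro e' h hU
    rcases Finset.mem_union.1 h with h | h
    · exact absurd hU (hS0mem e' h).2
    · rw [List.mem_toFinset, hP2, List.mem_append] at h
      rcases h with h | h
      · rw [hP1] at h
        exact Or.inl (by simpa using h)
      · exact Or.inr h
  have hnoP3 : ∀ e' ∈ S0 ∪ P3.toFinset, e' ∈ Uf →
      ((e' = s(v,t) ∨ e' = s(v,u) ∨ e' = s(v,w)) ∨ e' ∈ pendList G u) ∨
        e' ∈ pendList G w := by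
    intro e' h hU
    rcases Finset.mem_union.1 h with h | h
    · exact absurd hU (hS0mem e' h).2
    · rw [List.mem_toFinset, hP3, List.mem_append] at h
      rcases h with h | h
      · exact Or.inl (hnoP2 e' (Finset.mem_union_right _ (List.mem_toFinset.2 h)) hU)
      · exact Or.inr h
  have hnoP4 : ∀ e' ∈ S0 ∪ P4.toFinset, e' ∈ Uf →
      (((e' = s(v,t) ∨ e' = s(v,u) ∨ e' = s(v,w)) ∨ e' ∈ pendList G u) ∨
        e' ∈ pendList G w) ∨ e' ∈ pendList G v := by
    intro e' h hU
    rcases Finset.mem_union.1 h with h | h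
    · exact absurd hU (hS0mem e' h).2
    · rw [List.mem_toFinset, hP4, List.mem_append] at h
      rcases h with h | h
      · exact Or.inl (hnoP3 e' (Finset.mem_union_right _ (List.mem_toFinset.2 h)) hU)
      · exact Or.inr h
  -- vertex-local classification of edges
  have hcaseV0 : ∀ e' ∈ G.edgeSet, v ∈ e' →
      e' = s(v,t) ∨ e' = s(v,u) ∨ e' = s(v,w) ∨ e' ∈ pendList G v := by
    intro e' hE hv'
    obtain ⟨z', hadj, rfl⟩ := mem_edgesAt.1 (mem_edgesAt_of_mem hE hv')
    rcases hvnbr z' hadj with hdz | rfl | rfl | rfl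
    · exact Or.inr (Or.inr (Or.inr (mem_pendList.2 ⟨z', hadj, hdz, rfl⟩)))
    · exact Or.inl rfl
    · exact Or.inr (Or.inl rfl)
    · exact Or.inr (Or.inr (Or.inl rfl))
  have hcaseT0 : ∀ e' ∈ G.edgeSet, t ∈ e' →
      e' = s(v,t) ∨ e' = s(t,t') ∨ e' ∈ pendList G t := by
    intro e' hE ht''
    obtain ⟨z', hadj, rfl⟩ := mem_edgesAt.1 (mem_edgesAt_of_mem hE ht'')
    rcases htnbr z' hadj with hdz | rfl | rfl
    · exact Or.inr (Or.inr (mem_pendList.2 ⟨z', hadj, hdz, rfl⟩))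
    · exact Or.inl Sym2.eq_swap
    · exact Or.inr (Or.inl rfl)
  have hcaseU0 : ∀ e' ∈ G.edgeSet, u ∈ e' →
      e' = s(v,u) ∨ e' ∈ pendList G u ∨ ∃ z ∈ Au, e' = s(u,z) := by
    intro e' hE hu'
    obtain ⟨z', hadj, rfl⟩ := mem_edgesAt.1 (mem_edgesAt_of_mem hE hu')
    rcases hunbr z' hadj with hdz | rfl | hz
    · exact Or.inr (Or.inl (mem_pendList.2 ⟨z', hadj, hdz, rfl⟩))
    · exact Or.inl Sym2.eq_swap
    · exact Or.inr (Or.inr ⟨z', hz, rfl⟩)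
  have hcaseW0 : ∀ e' ∈ G.edgeSet, w ∈ e' →
      e' = s(v,w) ∨ e' ∈ pendList G w ∨ ∃ z ∈ Aw, e' = s(w,z) := by
    intro e' hE hw'
    obtain ⟨z', hadj, rfl⟩ := mem_edgesAt.1 (mem_edgesAt_of_mem hE hw')
    rcases hwnbr z' hadj with hdz | rfl | hz
    · exact Or.inr (Or.inl (mem_pendList.2 ⟨z', hadj, hdz, rfl⟩))
    · exact Or.inl Sym2.eq_swap
    · exact Or.inr (Or.inr ⟨z', hz, rfl⟩)
  -- cardinality helpers
  have hcardErase : ∀ (x : V) (e₀ : Sym2 V), e₀ ∈ edgesAt G x →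
      ((edgesAt G x).erase e₀).card ≤ Δ - 1 := by
    intro x e₀ h
    rw [Finset.card_erase_of_mem h, card_edgesAt]
    exact Nat.sub_le_sub_right (degAll x) 1
  have himAu : (Au.image (fun y => s(u,y))).card ≤ 2 :=
    le_trans Finset.card_image_le hAu2
  have himAw : (Aw.image (fun y => s(w,y))).card ≤ 2 :=
    le_trans Finset.card_image_le hAw2
  have hbiAu : (Au.biUnion (fun z => (edgesAt G z).erase s(u,z))).card ≤ 2*(Δ-1) := by
    apply le_trans (Finset.card_biUnion_le)
    calc ∑ z ∈ Au, ((edgesAt G z).erase s(u,z)).card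
        ≤ ∑ _z ∈ Au, (Δ-1) := by
          apply Finset.sum_le_sum
          intro z hz
          exact hcardErase z _ (mem_edgesAt.2 ⟨u, (hAuadj z hz).1.symm, Sym2.eq_swap⟩)
      _ = Au.card * (Δ-1) := by rw [Finset.sum_const, smul_eq_mul]
      _ ≤ 2*(Δ-1) := Nat.mul_le_mul_right _ hAu2
  have hbiAw : (Aw.biUnion (fun z => (edgesAt G z).erase s(w,z))).card ≤ 2*(Δ-1) := by
    apply le_trans (Finset.card_biUnion_le)
    calc ∑ z ∈ Aw, ((edgesAt G z).erase s(w,z)).card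
        ≤ ∑ _z ∈ Aw, (Δ-1) := by
          apply Finset.sum_le_sum
          intro z hz
          exact hcardErase z _ (mem_edgesAt.2 ⟨w, (hAwadj z hz).1.symm, Sym2.eq_swap⟩)
      _ = Aw.card * (Δ-1) := by rw [Finset.sum_const, smul_eq_mul]
      _ ≤ 2*(Δ-1) := Nat.mul_le_mul_right _ hAw2
  have htt'at_t : s(t,t') ∈ edgesAt G t := mem_edgesAt.2 ⟨t', htt', rfl⟩
  have htt'at_t' : s(t,t') ∈ edgesAt G t' := mem_edgesAt.2 ⟨t, htt'.symm, Sym2.eq_swap⟩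
  -- the seven stage bounds
  have Bvt : ((S0 ∪ P1.toFinset).filter (fun e' => Conflict G s(v,t) e')).card < 3*Δ := by
    have hcov : (S0 ∪ P1.toFinset).filter (fun e' => Conflict G s(v,t) e') ⊆
        (({s(v,u), s(v,w), s(t,t')} : Finset (Sym2 V)) ∪ Au.image (fun y => s(u,y)) ∪
          Aw.image (fun y => s(w,y))) ∪ (edgesAt G t').erase s(t,t') := by
      intro e' h'
      obtain ⟨hmem, hc⟩ := Finset.mem_filter.1 h'
      have hE : e' ∈ G.edgeSet := hPES _ hP1Uf e' hmem
      obtain ⟨hne, z, hz, hcase⟩ := conflict_cover hc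
      simp only [Finset.mem_union, Finset.mem_insert, Finset.mem_singleton, Finset.mem_image,
        Finset.mem_erase]
      have finV : v ∈ e' → ((((e' = s(v,u) ∨ e' = s(v,w) ∨ e' = s(t,t')) ∨
          ∃ y ∈ Au, s(u,y) = e') ∨ ∃ y ∈ Aw, s(w,y) = e') ∨
          e' ≠ s(t,t') ∧ e' ∈ edgesAt G t') := by
        intro hv'
        have hU : e' ∈ Uf := hedgesAtv (mem_edgesAt_of_mem hE hv')
        rcases hnoP1 e' hmem hU with h | h | h
        · exact absurd h hne
        · exact Or.inl (Or.inl (Or.inl (Or.inl h)))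
        · exact Or.inl (Or.inl (Or.inl (Or.inr (Or.inl h))))
      have finT : t ∈ e' → ((((e' = s(v,u) ∨ e' = s(v,w) ∨ e' = s(t,t')) ∨
          ∃ y ∈ Au, s(u,y) = e') ∨ ∃ y ∈ Aw, s(w,y) = e') ∨
          e' ≠ s(t,t') ∧ e' ∈ edgesAt G t') := by
        intro ht2
        rcases hcaseT0 e' hE ht2 with h | h | h
        · exact absurd h hne
        · exact Or.inl (Or.inl (Or.inl (Or.inr (Or.inr h))))
        · have hU := hpltU e' h
          rcases hnoP1 e' hmem hU with h2 | h2 | h2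
          · exact absurd h2 hne
          · exact absurd h2 (pendList_ne_core h hdv hdu)
          · exact absurd h2 (pendList_ne_core h hdv hdw)
      have finU : u ∈ e' → ((((e' = s(v,u) ∨ e' = s(v,w) ∨ e' = s(t,t')) ∨
          ∃ y ∈ Au, s(u,y) = e') ∨ ∃ y ∈ Aw, s(w,y) = e') ∨
          e' ≠ s(t,t') ∧ e' ∈ edgesAt G t') := by
        intro hu2
        rcases hcaseU0 e' hE hu2 with h | h | ⟨z2, hz2, rfl⟩
        · exact Or.inl (Or.inl (Or.inl (Or.inl h)))
        · have hU := hpluU e' h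
          rcases hnoP1 e' hmem hU with h2 | h2 | h2
          · exact absurd h2 hne
          · exact absurd h2 (pendList_ne_core h hdv hdu)
          · exact absurd h2 (pendList_ne_core h hdv hdw)
        · exact Or.inl (Or.inl (Or.inr ⟨z2, hz2, rfl⟩))
      have finW : w ∈ e' → ((((e' = s(v,u) ∨ e' = s(v,w) ∨ e' = s(t,t')) ∨
          ∃ y ∈ Au, s(u,y) = e') ∨ ∃ y ∈ Aw, s(w,y) = e') ∨
          e' ≠ s(t,t') ∧ e' ∈ edgesAt G t') := by
        intro hw2
        rcases hcaseW0 e' hE hw2 with h | h | ⟨z2, hz2, rfl⟩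
        · exact Or.inl (Or.inl (Or.inl (Or.inr (Or.inl h))))
        · have hU := hplwU e' h
          rcases hnoP1 e' hmem hU with h2 | h2 | h2
          · exact absurd h2 hne
          · exact absurd h2 (pendList_ne_core h hdv hdu)
          · exact absurd h2 (pendList_ne_core h hdv hdw)
        · exact Or.inl (Or.inr ⟨z2, hz2, rfl⟩)
      have finT' : t' ∈ e' → ((((e' = s(v,u) ∨ e' = s(v,w) ∨ e' = s(t,t')) ∨
          ∃ y ∈ Au, s(u,y) = e') ∨ ∃ y ∈ Aw, s(w,y) = e') ∨
          e' ≠ s(t,t') ∧ e' ∈ edgesAt G t') := by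
        intro ht2
        by_cases h : e' = s(t,t')
        · exact Or.inl (Or.inl (Or.inl (Or.inr (Or.inr h))))
        · exact Or.inr ⟨h, mem_edgesAt_of_mem hE ht2⟩
      rcases hcase with rfl | rfl | hadj | hadj
      · exact finV hz
      · exact finT hz
      · rcases hvnbr z hadj with hdz | rfl | rfl | rfl
        · exact finV (by rw [pendant_unique hdz hadj hE hz]; exact Sym2.mem_iff.2 (Or.inl rfl))
        · exact finT hz
        · exact finU hz
        · exact finW hz
      · rcases htnbr z hadj with hdz | rfl | rfl
        · exact finT (by rw [pendant_unique hdz hadj hE hz]; exact Sym2.mem_iff.2 (Or.inl rfl))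
        · exact finV hz
        · exact finT' hz
    refine lt_of_le_of_lt (Finset.card_le_card hcov) (lt_of_le_of_lt
      (le_trans (Finset.card_union_le _ _) (Nat.add_le_add
        (le_trans (Finset.card_union_le _ _) (Nat.add_le_add
          (le_trans (Finset.card_union_le _ _) (Nat.add_le_add
            (card_le_three _ _ _) himAu)) himAw))
        (hcardErase t' _ htt'at_t'))) ?_)
    omega
  have Bvu : ((S0 ∪ P1.toFinset).filter (fun e' => Conflict G s(v,u) e')).card < 3*Δ := by
    have hcov : (S0 ∪ P1.toFinset).filter (fun e' => Conflict G s(v,u) e') ⊆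
        (({s(v,t), s(v,w), s(t,t')} : Finset (Sym2 V)) ∪ Au.image (fun y => s(u,y)) ∪
          Aw.image (fun y => s(w,y))) ∪ Au.biUnion (fun z => (edgesAt G z).erase s(u,z)) := by
      intro e' h'
      obtain ⟨hmem, hc⟩ := Finset.mem_filter.1 h'
      have hE : e' ∈ G.edgeSet := hPES _ hP1Uf e' hmem
      obtain ⟨hne, z, hz, hcase⟩ := conflict_cover hc
      simp only [Finset.mem_union, Finset.mem_insert, Finset.mem_singleton, Finset.mem_image]
      have finV : v ∈ e' → (((e' = s(v,t) ∨ e' = s(v,w) ∨ e' = s(t,t')) ∨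
          ∃ y ∈ Au, s(u,y) = e') ∨ ∃ y ∈ Aw, s(w,y) = e') ∨
          e' ∈ Au.biUnion (fun z => (edgesAt G z).erase s(u,z)) := by
        intro hv'
        have hU : e' ∈ Uf := hedgesAtv (mem_edgesAt_of_mem hE hv')
        rcases hnoP1 e' hmem hU with h | h | h
        · exact Or.inl (Or.inl (Or.inl (Or.inl h)))
        · exact absurd h hne
        · exact Or.inl (Or.inl (Or.inl (Or.inr (Or.inl h))))
      have finT : t ∈ e' → (((e' = s(v,t) ∨ e' = s(v,w) ∨ e' = s(t,t')) ∨
          ∃ y ∈ Au, s(u,y) = e') ∨ ∃ y ∈ Aw, s(w,y) = e') ∨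
          e' ∈ Au.biUnion (fun z => (edgesAt G z).erase s(u,z)) := by
        intro ht2
        rcases hcaseT0 e' hE ht2 with h | h | h
        · exact Or.inl (Or.inl (Or.inl (Or.inl h)))
        · exact Or.inl (Or.inl (Or.inl (Or.inr (Or.inr h))))
        · have hU := hpltU e' h
          rcases hnoP1 e' hmem hU with h2 | h2 | h2
          · exact absurd h2 (pendList_ne_core h hdv hdt)
          · exact absurd h2 (pendList_ne_core h hdv hdu)
          · exact absurd h2 (pendList_ne_core h hdv hdw)
      have finU : u ∈ e' → (((e' = s(v,t) ∨ e' = s(v,w) ∨ e' = s(t,t')) ∨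
          ∃ y ∈ Au, s(u,y) = e') ∨ ∃ y ∈ Aw, s(w,y) = e') ∨
          e' ∈ Au.biUnion (fun z => (edgesAt G z).erase s(u,z)) := by
        intro hu2
        rcases hcaseU0 e' hE hu2 with h | h | ⟨z2, hz2, rfl⟩
        · exact absurd h hne
        · have hU := hpluU e' h
          rcases hnoP1 e' hmem hU with h2 | h2 | h2
          · exact absurd h2 (pendList_ne_core h hdv hdt)
          · exact absurd h2 (pendList_ne_core h hdv hdu)
          · exact absurd h2 (pendList_ne_core h hdv hdw)
        · exact Or.inl (Or.inl (Or.inr ⟨z2, hz2, rfl⟩))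
      have finW : w ∈ e' → (((e' = s(v,t) ∨ e' = s(v,w) ∨ e' = s(t,t')) ∨
          ∃ y ∈ Au, s(u,y) = e') ∨ ∃ y ∈ Aw, s(w,y) = e') ∨
          e' ∈ Au.biUnion (fun z => (edgesAt G z).erase s(u,z)) := by
        intro hw2
        rcases hcaseW0 e' hE hw2 with h | h | ⟨z2, hz2, rfl⟩
        · exact Or.inl (Or.inl (Or.inl (Or.inr (Or.inl h))))
        · have hU := hplwU e' h
          rcases hnoP1 e' hmem hU with h2 | h2 | h2
          · exact absurd h2 (pendList_ne_core h hdv hdt)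
          · exact absurd h2 (pendList_ne_core h hdv hdu)
          · exact absurd h2 (pendList_ne_core h hdv hdw)
        · exact Or.inl (Or.inr ⟨z2, hz2, rfl⟩)
      rcases hcase with rfl | rfl | hadj | hadj
      · exact finV hz
      · exact finU hz
      · rcases hvnbr z hadj with hdz | rfl | rfl | rfl
        · exact finV (by rw [pendant_unique hdz hadj hE hz]; exact Sym2.mem_iff.2 (Or.inl rfl))
        · exact finT hz
        · exact finU hz
        · exact finW hz
      · rcases hunbr z hadj with hdz | rfl | hzAu
        · exact finU (by rw [pendant_unique hdz hadj hE hz]; exact Sym2.mem_iff.2 (Or.inl rfl))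
        · exact finV hz
        · by_cases h : e' = s(u,z)
          · exact Or.inl (Or.inl (Or.inr ⟨z, hzAu, h.symm⟩))
          · exact Or.inr (Finset.mem_biUnion.2 ⟨z, hzAu,
              Finset.mem_erase.2 ⟨h, mem_edgesAt_of_mem hE hz⟩⟩)
    refine lt_of_le_of_lt (Finset.card_le_card hcov) (lt_of_le_of_lt
      (le_trans (Finset.card_union_le _ _) (Nat.add_le_add
        (le_trans (Finset.card_union_le _ _) (Nat.add_le_add
          (le_trans (Finset.card_union_le _ _) (Nat.add_le_add
            (card_le_three _ _ _) himAu)) himAw))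
        hbiAu)) ?_)
    omega
  have Bvw : ((S0 ∪ P1.toFinset).filter (fun e' => Conflict G s(v,w) e')).card < 3*Δ := by
    have hcov : (S0 ∪ P1.toFinset).filter (fun e' => Conflict G s(v,w) e') ⊆
        (({s(v,t), s(v,u), s(t,t')} : Finset (Sym2 V)) ∪ Au.image (fun y => s(u,y)) ∪
          Aw.image (fun y => s(w,y))) ∪ Aw.biUnion (fun z => (edgesAt G z).erase s(w,z)) := by
      intro e' h'
      obtain ⟨hmem, hc⟩ := Finset.mem_filter.1 h'
      have hE : e' ∈ G.edgeSet := hPES _ hP1Uf e' hmem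
      obtain ⟨hne, z, hz, hcase⟩ := conflict_cover hc
      simp only [Finset.mem_union, Finset.mem_insert, Finset.mem_singleton, Finset.mem_image]
      have finV : v ∈ e' → (((e' = s(v,t) ∨ e' = s(v,u) ∨ e' = s(t,t')) ∨
          ∃ y ∈ Au, s(u,y) = e') ∨ ∃ y ∈ Aw, s(w,y) = e') ∨
          e' ∈ Aw.biUnion (fun z => (edgesAt G z).erase s(w,z)) := by
        intro hv'
        have hU : e' ∈ Uf := hedgesAtv (mem_edgesAt_of_mem hE hv')
        rcases hnoP1 e' hmem hU with h | h | h
        · exact Or.inl (Or.inl (Or.inl (Or.inl h)))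
        · exact Or.inl (Or.inl (Or.inl (Or.inr (Or.inl h))))
        · exact absurd h hne
      have finT : t ∈ e' → (((e' = s(v,t) ∨ e' = s(v,u) ∨ e' = s(t,t')) ∨
          ∃ y ∈ Au, s(u,y) = e') ∨ ∃ y ∈ Aw, s(w,y) = e') ∨
          e' ∈ Aw.biUnion (fun z => (edgesAt G z).erase s(w,z)) := by
        intro ht2
        rcases hcaseT0 e' hE ht2 with h | h | h
        · exact Or.inl (Or.inl (Or.inl (Or.inl h)))
        · exact Or.inl (Or.inl (Or.inl (Or.inr (Or.inr h))))
        · have hU := hpltU e' h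
          rcases hnoP1 e' hmem hU with h2 | h2 | h2
          · exact absurd h2 (pendList_ne_core h hdv hdt)
          · exact absurd h2 (pendList_ne_core h hdv hdu)
          · exact absurd h2 (pendList_ne_core h hdv hdw)
      have finU : u ∈ e' → (((e' = s(v,t) ∨ e' = s(v,u) ∨ e' = s(t,t')) ∨
          ∃ y ∈ Au, s(u,y) = e') ∨ ∃ y ∈ Aw, s(w,y) = e') ∨
          e' ∈ Aw.biUnion (fun z => (edgesAt G z).erase s(w,z)) := by
        intro hu2
        rcases hcaseU0 e' hE hu2 with h | h | ⟨z2, hz2, rfl⟩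
        · exact Or.inl (Or.inl (Or.inl (Or.inr (Or.inl h))))
        · have hU := hpluU e' h
          rcases hnoP1 e' hmem hU with h2 | h2 | h2
          · exact absurd h2 (pendList_ne_core h hdv hdt)
          · exact absurd h2 (pendList_ne_core h hdv hdu)
          · exact absurd h2 (pendList_ne_core h hdv hdw)
        · exact Or.inl (Or.inl (Or.inr ⟨z2, hz2, rfl⟩))
      have finW : w ∈ e' → (((e' = s(v,t) ∨ e' = s(v,u) ∨ e' = s(t,t')) ∨
          ∃ y ∈ Au, s(u,y) = e') ∨ ∃ y ∈ Aw, s(w,y) = e') ∨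
          e' ∈ Aw.biUnion (fun z => (edgesAt G z).erase s(w,z)) := by
        intro hw2
        rcases hcaseW0 e' hE hw2 with h | h | ⟨z2, hz2, rfl⟩
        · exact absurd h hne
        · have hU := hplwU e' h
          rcases hnoP1 e' hmem hU with h2 | h2 | h2
          · exact absurd h2 (pendList_ne_core h hdv hdt)
          · exact absurd h2 (pendList_ne_core h hdv hdu)
          · exact absurd h2 (pendList_ne_core h hdv hdw)
        · exact Or.inl (Or.inr ⟨z2, hz2, rfl⟩)
      rcases hcase with rfl | rfl | hadj | hadj
      · exact finV hz
      · exact finW hz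
      · rcases hvnbr z hadj with hdz | rfl | rfl | rfl
        · exact finV (by rw [pendant_unique hdz hadj hE hz]; exact Sym2.mem_iff.2 (Or.inl rfl))
        · exact finT hz
        · exact finU hz
        · exact finW hz
      · rcases hwnbr z hadj with hdz | rfl | hzAu
        · exact finW (by rw [pendant_unique hdz hadj hE hz]; exact Sym2.mem_iff.2 (Or.inl rfl))
        · exact finV hz
        · by_cases h : e' = s(w,z)
          · exact Or.inl (Or.inr ⟨z, hzAu, h.symm⟩)
          · exact Or.inr (Finset.mem_biUnion.2 ⟨z, hzAu,
              Finset.mem_erase.2 ⟨h, mem_edgesAt_of_mem hE hz⟩⟩)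
    refine lt_of_le_of_lt (Finset.card_le_card hcov) (lt_of_le_of_lt
      (le_trans (Finset.card_union_le _ _) (Nat.add_le_add
        (le_trans (Finset.card_union_le _ _) (Nat.add_le_add
          (le_trans (Finset.card_union_le _ _) (Nat.add_le_add
            (card_le_three _ _ _) himAu)) himAw))
        hbiAw)) ?_)
    omega
  have Bpu : ∀ e ∈ pendList G u,
      ((S0 ∪ P2.toFinset).filter (fun e' => Conflict G e e')).card < 3*Δ := by
    intro e he
    obtain ⟨x, hux, hdx, rfl⟩ := mem_pendList.1 he
    have hcov : (S0 ∪ P2.toFinset).filter (fun e' => Conflict G s(u,x) e') ⊆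
        ((edgesAt G u).erase s(u,x) ∪ ({s(v,t), s(v,w)} : Finset (Sym2 V))) ∪
          Au.biUnion (fun z => (edgesAt G z).erase s(u,z)) := by
      intro e' h'
      obtain ⟨hmem, hc⟩ := Finset.mem_filter.1 h'
      have hE : e' ∈ G.edgeSet := hPES _ hP2Uf e' hmem
      obtain ⟨hne, z, hz, hcase⟩ := conflict_cover hc
      simp only [Finset.mem_union, Finset.mem_insert, Finset.mem_singleton, Finset.mem_erase]
      have finU : u ∈ e' → (((e' ≠ s(u,x) ∧ e' ∈ edgesAt G u) ∨ (e' = s(v,t) ∨ e' = s(v,w))) ∨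
          e' ∈ Au.biUnion (fun z => (edgesAt G z).erase s(u,z))) :=
        fun hu2 => Or.inl (Or.inl ⟨hne, mem_edgesAt_of_mem hE hu2⟩)
      have finV : v ∈ e' → (((e' ≠ s(u,x) ∧ e' ∈ edgesAt G u) ∨ (e' = s(v,t) ∨ e' = s(v,w))) ∨
          e' ∈ Au.biUnion (fun z => (edgesAt G z).erase s(u,z))) := by
        intro hv'
        have hU : e' ∈ Uf := hedgesAtv (mem_edgesAt_of_mem hE hv')
        rcases hnoP2 e' hmem hU with (h | h | h) | h
        · exact Or.inl (Or.inr (Or.inl h))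
        · exact finU (by rw [h]; exact Sym2.mem_iff.2 (Or.inr rfl))
        · exact Or.inl (Or.inr (Or.inr h))
        · obtain ⟨y, _, _, rfl⟩ := mem_pendList.1 h
          exact finU (Sym2.mem_iff.2 (Or.inl rfl))
      have finAu : ∀ z2 ∈ Au, z2 ∈ e' →
          (((e' ≠ s(u,x) ∧ e' ∈ edgesAt G u) ∨ (e' = s(v,t) ∨ e' = s(v,w))) ∨
          e' ∈ Au.biUnion (fun z => (edgesAt G z).erase s(u,z))) := by
        intro z2 hz2 hze
        by_cases h : e' = s(u,z2)
        · refine Or.inl (Or.inl ⟨hne, ?_⟩)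
          rw [h]
          exact mem_edgesAt.2 ⟨z2, (hAuadj z2 hz2).1, rfl⟩
        · exact Or.inr (Finset.mem_biUnion.2 ⟨z2, hz2,
            Finset.mem_erase.2 ⟨h, mem_edgesAt_of_mem hE hze⟩⟩)
      rcases hcase with rfl | rfl | hadj | hadj
      · exact finU hz
      · exact absurd (pendant_unique hdx hux hE hz) hne
      · rcases hunbr z hadj with hdz | rfl | hzAu
        · exact finU (by rw [pendant_unique hdz hadj hE hz]; exact Sym2.mem_iff.2 (Or.inl rfl))
        · exact finV hz
        · exact finAu z hzAu hz
      · have hzu : z = u := pend_nbr hdx hux hadj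
        subst hzu
        exact finU hz
    refine lt_of_le_of_lt (Finset.card_le_card hcov) (lt_of_le_of_lt
      (le_trans (Finset.card_union_le _ _) (Nat.add_le_add
        (le_trans (Finset.card_union_le _ _) (Nat.add_le_add
          (hcardErase u _ (mem_edgesAt.2 ⟨x, hux, rfl⟩))
          (card_le_two _ _)))
        hbiAu)) ?_)
    omega
  have Bpw : ∀ e ∈ pendList G w,
      ((S0 ∪ P3.toFinset).filter (fun e' => Conflict G e e')).card < 3*Δ := by
    intro e he
    obtain ⟨x, hwx, hdx, rfl⟩ := mem_pendList.1 he
    have hcov : (S0 ∪ P3.toFinset).filter (fun e' => Conflict G s(w,x) e') ⊆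
        ((edgesAt G w).erase s(w,x) ∪ ({s(v,t), s(v,u)} : Finset (Sym2 V))) ∪
          Aw.biUnion (fun z => (edgesAt G z).erase s(w,z)) := by
      intro e' h'
      obtain ⟨hmem, hc⟩ := Finset.mem_filter.1 h'
      have hE : e' ∈ G.edgeSet := hPES _ hP3Uf e' hmem
      obtain ⟨hne, z, hz, hcase⟩ := conflict_cover hc
      simp only [Finset.mem_union, Finset.mem_insert, Finset.mem_singleton, Finset.mem_erase]
      have finW : w ∈ e' → (((e' ≠ s(w,x) ∧ e' ∈ edgesAt G w) ∨ (e' = s(v,t) ∨ e' = s(v,u))) ∨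
          e' ∈ Aw.biUnion (fun z => (edgesAt G z).erase s(w,z))) :=
        fun hw2 => Or.inl (Or.inl ⟨hne, mem_edgesAt_of_mem hE hw2⟩)
      have finV : v ∈ e' → (((e' ≠ s(w,x) ∧ e' ∈ edgesAt G w) ∨ (e' = s(v,t) ∨ e' = s(v,u))) ∨
          e' ∈ Aw.biUnion (fun z => (edgesAt G z).erase s(w,z))) := by
        intro hv'
        have hU : e' ∈ Uf := hedgesAtv (mem_edgesAt_of_mem hE hv')
        rcases hnoP3 e' hmem hU with ((h | h | h) | h) | h
        · exact Or.inl (Or.inr (Or.inl h))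
        · exact Or.inl (Or.inr (Or.inr h))
        · exact finW (by rw [h]; exact Sym2.mem_iff.2 (Or.inr rfl))
        · -- e' ∈ pendList G u and v ∈ e' : impossible
          exfalso
          obtain ⟨y, _, hdy, rfl⟩ := mem_pendList.1 h
          rcases Sym2.mem_iff.1 hv' with h2 | h2
          · exact hvneu h2
          · exact hdv (h2 ▸ hdy)
        · obtain ⟨y, _, _, rfl⟩ := mem_pendList.1 h
          exact finW (Sym2.mem_iff.2 (Or.inl rfl))
      have finAw : ∀ z2 ∈ Aw, z2 ∈ e' →
          (((e' ≠ s(w,x) ∧ e' ∈ edgesAt G w) ∨ (e' = s(v,t) ∨ e' = s(v,u))) ∨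
          e' ∈ Aw.biUnion (fun z => (edgesAt G z).erase s(w,z))) := by
        intro z2 hz2 hze
        by_cases h : e' = s(w,z2)
        · refine Or.inl (Or.inl ⟨hne, ?_⟩)
          rw [h]
          exact mem_edgesAt.2 ⟨z2, (hAwadj z2 hz2).1, rfl⟩
        · exact Or.inr (Finset.mem_biUnion.2 ⟨z2, hz2,
            Finset.mem_erase.2 ⟨h, mem_edgesAt_of_mem hE hze⟩⟩)
      rcases hcase with rfl | rfl | hadj | hadj
      · exact finW hz
      · exact absurd (pendant_unique hdx hwx hE hz) hne
      · rcases hwnbr z hadj with hdz | rfl | hzAw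
        · exact finW (by rw [pendant_unique hdz hadj hE hz]; exact Sym2.mem_iff.2 (Or.inl rfl))
        · exact finV hz
        · exact finAw z hzAw hz
      · have hzw : z = w := pend_nbr hdx hwx hadj
        subst hzw
        exact finW hz
    refine lt_of_le_of_lt (Finset.card_le_card hcov) (lt_of_le_of_lt
      (le_trans (Finset.card_union_le _ _) (Nat.add_le_add
        (le_trans (Finset.card_union_le _ _) (Nat.add_le_add
          (hcardErase w _ (mem_edgesAt.2 ⟨x, hwx, rfl⟩))
          (card_le_two _ _)))
        hbiAw)) ?_)
    omega
  have Bpv : ∀ e ∈ pendList G v,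
      ((S0 ∪ P4.toFinset).filter (fun e' => Conflict G e e')).card < 3*Δ := by
    intro e he
    obtain ⟨x, hvx, hdx, rfl⟩ := mem_pendList.1 he
    have hcov : (S0 ∪ P4.toFinset).filter (fun e' => Conflict G s(v,x) e') ⊆
        ((edgesAt G v).erase s(v,x) ∪ (edgesAt G u).erase s(v,u)) ∪
          ((edgesAt G w).erase s(v,w) ∪ ({s(t,t')} : Finset (Sym2 V))) := by
      intro e' h'
      obtain ⟨hmem, hc⟩ := Finset.mem_filter.1 h'
      have hE : e' ∈ G.edgeSet := hPES _ hP4Uf e' hmem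
      obtain ⟨hne, z, hz, hcase⟩ := conflict_cover hc
      simp only [Finset.mem_union, Finset.mem_singleton, Finset.mem_erase]
      have finV : v ∈ e' → (((e' ≠ s(v,x) ∧ e' ∈ edgesAt G v) ∨
          (e' ≠ s(v,u) ∧ e' ∈ edgesAt G u)) ∨
          ((e' ≠ s(v,w) ∧ e' ∈ edgesAt G w) ∨ e' = s(t,t'))) :=
        fun hv2 => Or.inl (Or.inl ⟨hne, mem_edgesAt_of_mem hE hv2⟩)
      have finU : u ∈ e' → (((e' ≠ s(v,x) ∧ e' ∈ edgesAt G v) ∨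
          (e' ≠ s(v,u) ∧ e' ∈ edgesAt G u)) ∨
          ((e' ≠ s(v,w) ∧ e' ∈ edgesAt G w) ∨ e' = s(t,t'))) := by
        intro hu2
        by_cases h : e' = s(v,u)
        · exact finV (by rw [h]; exact Sym2.mem_iff.2 (Or.inl rfl))
        · exact Or.inl (Or.inr ⟨h, mem_edgesAt_of_mem hE hu2⟩)
      have finW : w ∈ e' → (((e' ≠ s(v,x) ∧ e' ∈ edgesAt G v) ∨
          (e' ≠ s(v,u) ∧ e' ∈ edgesAt G u)) ∨
          ((e' ≠ s(v,w) ∧ e' ∈ edgesAt G w) ∨ e' = s(t,t'))) := by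
        intro hw2
        by_cases h : e' = s(v,w)
        · exact finV (by rw [h]; exact Sym2.mem_iff.2 (Or.inl rfl))
        · exact Or.inr (Or.inl ⟨h, mem_edgesAt_of_mem hE hw2⟩)
      have finT : t ∈ e' → (((e' ≠ s(v,x) ∧ e' ∈ edgesAt G v) ∨
          (e' ≠ s(v,u) ∧ e' ∈ edgesAt G u)) ∨
          ((e' ≠ s(v,w) ∧ e' ∈ edgesAt G w) ∨ e' = s(t,t'))) := by
        intro ht2
        rcases hcaseT0 e' hE ht2 with h | h | h
        · exact finV (by rw [h]; exact Sym2.mem_iff.2 (Or.inl rfl))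
        · exact Or.inr (Or.inr h)
        · have hU := hpltU e' h
          rcases hnoP4 e' hmem hU with (((h2 | h2 | h2) | h2) | h2) | h2
          · exact absurd h2 (pendList_ne_core h hdv hdt)
          · exact absurd h2 (pendList_ne_core h hdv hdu)
          · exact absurd h2 (pendList_ne_core h hdv hdw)
          · exact absurd h2 (pendList_disj (fun hh => hut hh.symm) hdt h)
          · exact absurd h2 (pendList_disj (fun hh => hwt hh.symm) hdt h)
          · exact absurd h2 (pendList_disj (fun hh => hvnet hh.symm) hdt h)
      rcases hcase with rfl | rfl | hadj | hadj
      · exact finV hz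
      · exact absurd (pendant_unique hdx hvx hE hz) hne
      · rcases hvnbr z hadj with hdz | rfl | rfl | rfl
        · exact finV (by rw [pendant_unique hdz hadj hE hz]; exact Sym2.mem_iff.2 (Or.inl rfl))
        · exact finT hz
        · exact finU hz
        · exact finW hz
      · have hzv : z = v := pend_nbr hdx hvx hadj
        subst hzv
        exact finV hz
    refine lt_of_le_of_lt (Finset.card_le_card hcov) (lt_of_le_of_lt
      (le_trans (Finset.card_union_le _ _) (Nat.add_le_add
        (le_trans (Finset.card_union_le _ _) (Nat.add_le_add
          (hcardErase v _ (mem_edgesAt.2 ⟨x, hvx, rfl⟩))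
          (hcardErase u _ (mem_edgesAt.2 ⟨v, hvu.symm, Sym2.eq_swap⟩))))
        (le_trans (Finset.card_union_le _ _) (Nat.add_le_add
          (hcardErase w _ (mem_edgesAt.2 ⟨v, hvw.symm, Sym2.eq_swap⟩))
          (le_of_eq (Finset.card_singleton _)))))) ?_)
    omega
  have Bpt : ∀ e ∈ pendList G t,
      ((S0 ∪ Uf).filter (fun e' => Conflict G e e')).card < 3*Δ := by
    intro e he
    obtain ⟨y, hty, hdy, rfl⟩ := mem_pendList.1 he
    have hcov : (S0 ∪ Uf).filter (fun e' => Conflict G s(t,y) e') ⊆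
        ((edgesAt G t).erase s(t,y) ∪ (edgesAt G v).erase s(v,t)) ∪
          (edgesAt G t').erase s(t,t') := by
      intro e' h'
      obtain ⟨hmem, hc⟩ := Finset.mem_filter.1 h'
      have hE : e' ∈ G.edgeSet := hPES _ (Finset.Subset.refl Uf) e' hmem
      obtain ⟨hne, z, hz, hcase⟩ := conflict_cover hc
      simp only [Finset.mem_union, Finset.mem_erase]
      have finT : t ∈ e' → (((e' ≠ s(t,y) ∧ e' ∈ edgesAt G t) ∨
          (e' ≠ s(v,t) ∧ e' ∈ edgesAt G v)) ∨ (e' ≠ s(t,t') ∧ e' ∈ edgesAt G t')) :=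
        fun ht2 => Or.inl (Or.inl ⟨hne, mem_edgesAt_of_mem hE ht2⟩)
      have finV : v ∈ e' → (((e' ≠ s(t,y) ∧ e' ∈ edgesAt G t) ∨
          (e' ≠ s(v,t) ∧ e' ∈ edgesAt G v)) ∨ (e' ≠ s(t,t') ∧ e' ∈ edgesAt G t')) := by
        intro hv2
        by_cases h : e' = s(v,t)
        · exact finT (by rw [h]; exact Sym2.mem_iff.2 (Or.inr rfl))
        · exact Or.inl (Or.inr ⟨h, mem_edgesAt_of_mem hE hv2⟩)
      have finT' : t' ∈ e' → (((e' ≠ s(t,y) ∧ e' ∈ edgesAt G t) ∨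
          (e' ≠ s(v,t) ∧ e' ∈ edgesAt G v)) ∨ (e' ≠ s(t,t') ∧ e' ∈ edgesAt G t')) := by
        intro ht2
        by_cases h : e' = s(t,t')
        · exact finT (by rw [h]; exact Sym2.mem_iff.2 (Or.inl rfl))
        · exact Or.inr ⟨h, mem_edgesAt_of_mem hE ht2⟩
      rcases hcase with rfl | rfl | hadj | hadj
      · exact finT hz
      · exact absurd (pendant_unique hdy hty hE hz) hne
      · rcases htnbr z hadj with hdz | rfl | rfl
        · exact finT (by rw [pendant_unique hdz hadj hE hz]; exact Sym2.mem_iff.2 (Or.inl rfl))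
        · exact finV hz
        · exact finT' hz
      · have hzt : z = t := pend_nbr hdy hty hadj
        subst hzt
        exact finT hz
    refine lt_of_le_of_lt (Finset.card_le_card hcov) (lt_of_le_of_lt
      (le_trans (Finset.card_union_le _ _) (Nat.add_le_add
        (le_trans (Finset.card_union_le _ _) (Nat.add_le_add
          (hcardErase t _ (mem_edgesAt.2 ⟨y, hty, rfl⟩))
          (hcardErase v _ (mem_edgesAt.2 ⟨t, hvt, rfl⟩))))
        (hcardErase t' _ htt'at_t'))) ?_)
    omega
  -- monotonicity helper
  have monoB : ∀ (X Y : Finset (Sym2 V)) (e : Sym2 V), X ⊆ Y →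
      ((S0 ∪ X).filter (fun e' => Conflict G e e')).card ≤
      ((S0 ∪ Y).filter (fun e' => Conflict G e e')).card := by
    intro X Y e h
    exact Finset.card_le_card (Finset.filter_subset_filter _ (Finset.union_subset_union_right h))
  -- the per-split bound
  have hB : ∀ (L₁ L₂ : List (Sym2 V)) (e : Sym2 V), L = L₁ ++ e :: L₂ →
      ((S0 ∪ L₁.toFinset).filter (fun e' => Conflict G e e')).card < 3*Δ := by
    intro L₁ L₂ e hsplit
    have heL : e ∈ L := by
      rw [hsplit]
      exact List.mem_append_right _ (List.mem_cons_self)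
    have heL' := heL
    rw [hLdef] at heL'
    simp only [List.mem_cons, List.mem_append] at heL'
    have hLP : L = P4 ++ pendList G t := by
      rw [hLdef, hP4, hP3, hP2, hP1]
      simp
    rcases heL' with rfl | rfl | rfl | he | he | he | he
    · -- e = s(v,t)
      have heq : L₁ ++ s(v,t) :: L₂ = P1 ++
          (pendList G u ++ (pendList G w ++ (pendList G v ++ pendList G t))) := by
        rw [← hsplit, hLdef, hP1]
        simp
      have hnB : s(v,t) ∉ (pendList G u ++ (pendList G w ++ (pendList G v ++ pendList G t))) := by
        intro hmem
        simp only [List.mem_append] at hmem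
        rcases hmem with h | h | h | h
        · exact pendList_ne_core h hdv hdt rfl
        · exact pendList_ne_core h hdv hdt rfl
        · exact pendList_ne_core h hdv hdt rfl
        · exact pendList_ne_core h hdv hdt rfl
      have hsub : L₁.toFinset ⊆ P1.toFinset := by
        intro x hx
        exact List.mem_toFinset.2 (list_prefix_sub heq hnB x (List.mem_toFinset.1 hx))
      exact lt_of_le_of_lt (monoB _ _ _ hsub) Bvt
    · -- e = s(v,u)
      have heq : L₁ ++ s(v,u) :: L₂ = P1 ++
          (pendList G u ++ (pendList G w ++ (pendList G v ++ pendList G t))) := by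
        rw [← hsplit, hLdef, hP1]
        simp
      have hnB : s(v,u) ∉ (pendList G u ++ (pendList G w ++ (pendList G v ++ pendList G t))) := by
        intro hmem
        simp only [List.mem_append] at hmem
        rcases hmem with h | h | h | h
        · exact pendList_ne_core h hdv hdu rfl
        · exact pendList_ne_core h hdv hdu rfl
        · exact pendList_ne_core h hdv hdu rfl
        · exact pendList_ne_core h hdv hdu rfl
      have hsub : L₁.toFinset ⊆ P1.toFinset := by
        intro x hx
        exact List.mem_toFinset.2 (list_prefix_sub heq hnB x (List.mem_toFinset.1 hx))
      exact lt_of_le_of_lt (monoB _ _ _ hsub) Bvu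
    · -- e = s(v,w)
      have heq : L₁ ++ s(v,w) :: L₂ = P1 ++
          (pendList G u ++ (pendList G w ++ (pendList G v ++ pendList G t))) := by
        rw [← hsplit, hLdef, hP1]
        simp
      have hnB : s(v,w) ∉ (pendList G u ++ (pendList G w ++ (pendList G v ++ pendList G t))) := by
        intro hmem
        simp only [List.mem_append] at hmem
        rcases hmem with h | h | h | h
        · exact pendList_ne_core h hdv hdw rfl
        · exact pendList_ne_core h hdv hdw rfl
        · exact pendList_ne_core h hdv hdw rfl
        · exact pendList_ne_core h hdv hdw rfl
      have hsub : L₁.toFinset ⊆ P1.toFinset := by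
        intro x hx
        exact List.mem_toFinset.2 (list_prefix_sub heq hnB x (List.mem_toFinset.1 hx))
      exact lt_of_le_of_lt (monoB _ _ _ hsub) Bvw
    · -- e ∈ pendList G u
      have heq : L₁ ++ e :: L₂ = P2 ++ (pendList G w ++ (pendList G v ++ pendList G t)) := by
        rw [← hsplit, hLdef, hP2, hP1]
        simp
      have hnB : e ∉ (pendList G w ++ (pendList G v ++ pendList G t)) := by
        intro hmem
        simp only [List.mem_append] at hmem
        rcases hmem with h | h | h
        · exact pendList_disj huw hdu he h
        · exact pendList_disj hvneu.symm hdu he h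
        · exact pendList_disj hut hdu he h
      have hsub : L₁.toFinset ⊆ P2.toFinset := by
        intro x hx
        exact List.mem_toFinset.2 (list_prefix_sub heq hnB x (List.mem_toFinset.1 hx))
      exact lt_of_le_of_lt (monoB _ _ _ hsub) (Bpu e he)
    · -- e ∈ pendList G w
      have heq : L₁ ++ e :: L₂ = P3 ++ (pendList G v ++ pendList G t) := by
        rw [← hsplit, hLdef, hP3, hP2, hP1]
        simp
      have hnB : e ∉ (pendList G v ++ pendList G t) := by
        intro hmem
        simp only [List.mem_append] at hmem
        rcases hmem with h | h
        · exact pendList_disj hvnew.symm hdw he h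
        · exact pendList_disj hwt hdw he h
      have hsub : L₁.toFinset ⊆ P3.toFinset := by
        intro x hx
        exact List.mem_toFinset.2 (list_prefix_sub heq hnB x (List.mem_toFinset.1 hx))
      exact lt_of_le_of_lt (monoB _ _ _ hsub) (Bpw e he)
    · -- e ∈ pendList G v
      have heq : L₁ ++ e :: L₂ = P4 ++ pendList G t := by
        rw [← hsplit]
        exact hLP
      have hnB : e ∉ pendList G t := pendList_disj hvnet hdv he
      have hsub : L₁.toFinset ⊆ P4.toFinset := by
        intro x hx
        exact List.mem_toFinset.2 (list_prefix_sub heq hnB x (List.mem_toFinset.1 hx))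
      exact lt_of_le_of_lt (monoB _ _ _ hsub) (Bpv e he)
    · -- e ∈ pendList G t
      have hsub : L₁.toFinset ⊆ Uf := by
        intro x hx
        rw [hUfdef]
        rw [List.mem_toFinset] at hx ⊢
        rw [hsplit]
        exact List.mem_append_left _ hx
      exact lt_of_le_of_lt (monoB _ _ _ hsub) (Bpt e he)
  -- apply the greedy extension
  obtain ⟨C', hC'⟩ := greedy G L S0 C₀ hgood0 hB
  apply hnc
  refine ⟨C', ?_⟩
  intro e he e' he' hc
  have hmem : ∀ x ∈ G.edgeSet, x ∈ S0 ∪ L.toFinset := by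
    intro x hx
    rw [Finset.mem_union, hS0def, Finset.mem_sdiff, hESdef, Set.mem_toFinset, ← hUfdef]
    by_cases h : x ∈ Uf
    · exact Or.inr (hUfdef ▸ h)
    · exact Or.inl ⟨hx, h⟩
  exact hC' e (hmem e he) e' (hmem e' he') hc

end StrongEC
end
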